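/- arXiv:1610.05542 — 8 statements merged into one kernel-verified Lean document; each statement's English description precedes it below -/
import Mathlib

section
/- Set p₊ = (Ml² + (M²l⁴ + l⁶/27)^{1/2})^{1/3} and p₋ = (Ml² − (M²l⁴ + l⁶/27)^{1/2})^{1/3}, and r_SAdS = p₊ + p₋. Then F(r_SAdS) = 0, r_SAdS is the unique zero of F in (0,∞), and F(r) > 0 for all r > r_SAdS. -/
/-- The metric coefficient `F(r) = 1 - 2M/r + r²/l²`. -/
noncomputable def F (M l r : ℝ) : ℝ := 1 - 2*M/r + r^2/l^2

/-- With `p₊ = (Ml² + (M²l⁴ + l⁶/27)^{1/2})^{1/3}` and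
`p₋ = (Ml² − (M²l⁴ + l⁶/27)^{1/2})^{1/3}` (real cube root) and
`r_SAdS = p₊ + p₋`, one has `F(r_SAdS) = 0`, `r_SAdS` is the unique zero of `F`
in `(0,∞)`, and `F(r) > 0` for all `r > r_SAdS`. -/
theorem stmt_0 (M l : ℝ) (hM : 0 < M) (hl : 0 < l)
    (pp pm rSAdS : ℝ)
    (hpp : pp = (M*l^2 + Real.sqrt (M^2*l^4 + l^6/27)) ^ ((1:ℝ)/3))
    (hpm : pm = -((Real.sqrt (M^2*l^4 + l^6/27) - M*l^2) ^ ((1:ℝ)/3)))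
    (hrS : rSAdS = pp + pm) :
    0 < rSAdS ∧ F M l rSAdS = 0 ∧
      (∀ r, 0 < r → F M l r = 0 → r = rSAdS) ∧
      (∀ r, rSAdS < r → 0 < F M l r) := by
  set s := Real.sqrt (M^2*l^4 + l^6/27) with hs
  have hD : (0:ℝ) ≤ M^2*l^4 + l^6/27 := by positivity
  have hs2 : s^2 = M^2*l^4 + l^6/27 := Real.sq_sqrt hD
  have hsnn : 0 ≤ s := Real.sqrt_nonneg _
  have hMl : 0 < M*l^2 := by positivity
  have hsge : M*l^2 ≤ s := by nlinarith [hs2, pow_pos hl 6, hsnn, hMl]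
  have h13 : (1:ℝ)/3 = ((3:ℕ):ℝ)⁻¹ := by norm_num
  have ha : (0:ℝ) ≤ M*l^2 + s := by linarith
  have hb : (0:ℝ) ≤ s - M*l^2 := by linarith
  have hppc : pp^3 = M*l^2 + s := by
    rw [hpp, h13]; exact Real.rpow_inv_natCast_pow ha (by norm_num)
  have hpmc : pm^3 = M*l^2 - s := by
    rw [hpm]
    have : ((s - M*l^2) ^ ((1:ℝ)/3))^3 = s - M*l^2 := by
      rw [h13]; exact Real.rpow_inv_natCast_pow hb (by norm_num)
    nlinarith [this]
  have hmul : pp * pm = -(l^2/3) := by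
    rw [hpp, hpm, mul_neg, ← Real.mul_rpow ha hb]
    have h1 : (M*l^2 + s) * (s - M*l^2) = (l^2/3)^3 := by nlinarith
    rw [h1, h13, Real.pow_rpow_inv_natCast (by positivity) (by norm_num)]
  have hcube : rSAdS^3 + l^2*rSAdS - 2*M*l^2 = 0 := by
    have : rSAdS^3 = pp^3 + pm^3 + 3*(pp*pm)*rSAdS := by rw [hrS]; ring
    rw [this, hppc, hpmc, hmul]; ring
  have hrpos : 0 < rSAdS := by
    by_contra h
    push_neg at h
    nlinarith [hcube, hMl, mul_nonneg (sq_nonneg rSAdS) (neg_nonneg.2 h)]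
  have hne : rSAdS ≠ 0 := ne_of_gt hrpos
  have hlne : l ≠ 0 := ne_of_gt hl
  have hFform : ∀ r : ℝ, r ≠ 0 → F M l r = (r^3 + l^2*r - 2*M*l^2)/(r*l^2) := by
    intro r hr
    unfold F
    field_simp
    ring
  refine ⟨hrpos, ?_, ?_, ?_⟩
  · rw [hFform rSAdS hne, hcube, zero_div]
  · intro r hr hF
    rw [hFform r (ne_of_gt hr), div_eq_zero_iff] at hF
    have h0 : r^3 + l^2*r - 2*M*l^2 = 0 := by
      rcases hF with h | h
      · exact h
      · exact absurd h (by positivity)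
    have key : (r - rSAdS) * (r^2 + r*rSAdS + rSAdS^2 + l^2) = 0 := by
      linear_combination h0 - hcube
    have hposf : 0 < r^2 + r*rSAdS + rSAdS^2 + l^2 := by
      linarith [mul_pos hr hrpos, sq_nonneg r, sq_nonneg rSAdS, pow_pos hl 2]
    rcases mul_eq_zero.1 key with h | h
    · linarith [sub_eq_zero.1 h]
    · exact absurd h (ne_of_gt hposf)
  · intro r hr
    have hr0 : 0 < r := lt_trans hrpos hr
    rw [hFform r (ne_of_gt hr0)]
    have hposf : 0 < r^2 + r*rSAdS + rSAdS^2 + l^2 := by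
      linarith [mul_pos hr0 hrpos, sq_nonneg r, sq_nonneg rSAdS, pow_pos hl 2]
    have hid : r^3 + l^2*r - 2*M*l^2 =
        (rSAdS^3 + l^2*rSAdS - 2*M*l^2) + (r - rSAdS)*(r^2 + r*rSAdS + rSAdS^2 + l^2) := by
      ring
    have : 0 < r^3 + l^2*r - 2*M*l^2 := by
      rw [hid, hcube, zero_add]
      exact mul_pos (sub_pos.2 hr) hposf
    positivity
end

section
/- For every r₀ > r_SAdS, the function s ↦ 1/F(s) is integrable on (r₀, ∞) (the improper integral ∫_{r₀}^∞ F(s)^{−1} ds is finite), and ∫_{r}^{r₀} F(s)^{−1} ds → +∞ as r → r_SAdS from the right. Consequently r ↦ −∫_r^∞ F(s)^{−1} ds is a strictly increasing bijection from (r_SAdS, ∞) onto (−∞, 0). -/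
/-!
Since `F(r_SAdS) = 0`, `F(s) = (s - r_SAdS)(s² + s r_SAdS + r_SAdS² + l²)/(l² s)`, so on
`(r_SAdS, r₀]` one has `1/F(s) ≥ c/(s - r_SAdS)` and `∫_r^{r₀} 1/F` grows like
`-c log (r - r_SAdS)`.
For `s ≥ 2M`, `F(s) ≥ s²/l²`, so the tail `∫_r^∞ 1/F` is finite and tends to `0` as `r → ∞`.
Thus `r ↦ ∫_r^∞ 1/F` is positive, strictly decreasing and continuous, tends to `+∞` at `r_SAdS`
and to `0` at `∞`; the intermediate value theorem gives the bijection onto `(-∞, 0)`.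
-/

open MeasureTheory Filter Set

open Topology

section IntegralIoi

variable {f : ℝ → ℝ} {a : ℝ}

lemma strictAntiOn_integral_Ioi (hpos : ∀ x ∈ Ioi a, 0 < f x)
    (hint : ∀ x ∈ Ioi a, IntegrableOn f (Ioi x)) :
    StrictAntiOn (fun r => ∫ s in Ioi r, f s) (Ioi a) := by
  intro x hx y hy hxy
  have hxy_pos : 0 < ∫ s in x..y, f s :=
    intervalIntegral.intervalIntegral_pos_of_pos_on
      ((intervalIntegrable_iff_integrableOn_Ioc_of_le hxy.le).2
        ((hint x hx).mono_set Ioc_subset_Ioi_self))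
      (fun s hs => hpos s (lt_trans hx hs.1)) hxy
  show ∫ s in Ioi y, f s < ∫ s in Ioi x, f s
  rw [← intervalIntegral.integral_interval_add_Ioi (hint x hx) (hint y hy)]
  linarith

lemma integral_Ioi_pos (hpos : ∀ x ∈ Ioi a, 0 < f x)
    (hint : ∀ x ∈ Ioi a, IntegrableOn f (Ioi x)) {x : ℝ} (hx : x ∈ Ioi a) :
    0 < ∫ s in Ioi x, f s := by
  have hx' : x + 1 ∈ Ioi a := lt_trans hx (lt_add_one x)
  have htail : 0 ≤ ∫ s in Ioi (x + 1), f s :=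
    setIntegral_nonneg measurableSet_Ioi fun s hs => (hpos s (mem_Ioi.2 (lt_trans hx' hs))).le
  linarith [strictAntiOn_integral_Ioi hpos hint hx hx' (lt_add_one x)]

lemma tendsto_integral_Ioi_nhdsGT (hint : ∀ x ∈ Ioi a, IntegrableOn f (Ioi x)) {b : ℝ}
    (hb : b ∈ Ioi a) (hdiv : Tendsto (fun r => ∫ s in Ioc r b, f s) (𝓝[>] a) atTop) :
    Tendsto (fun r => ∫ s in Ioi r, f s) (𝓝[>] a) atTop := by
  refine (tendsto_atTop_add_const_right _ (∫ s in Ioi b, f s) hdiv).congr' ?_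
  filter_upwards [Ioo_mem_nhdsGT hb] with r hr
  rw [← intervalIntegral.integral_of_le hr.2.le,
    intervalIntegral.integral_interval_add_Ioi (hint r hr.1) (hint b hb)]

lemma continuousOn_integral_Ioi (hint : ∀ x ∈ Ioi a, IntegrableOn f (Ioi x)) {x y : ℝ}
    (hx : x ∈ Ioi a) (hxy : x ≤ y) :
    ContinuousOn (fun r => ∫ s in Ioi r, f s) (Icc x y) := by
  have hprim := intervalIntegral.continuousOn_primitive_interval' (μ := volume)
    ((intervalIntegrable_iff_integrableOn_Ioc_of_le hxy).2
      ((hint x hx).mono_set Ioc_subset_Ioi_self)) left_mem_uIcc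
  rw [uIcc_of_le hxy] at hprim
  refine ContinuousOn.congr (f := fun r => (∫ s in Ioi x, f s) - ∫ s in x..r, f s)
    (continuousOn_const.sub hprim) fun r hr => ?_
  rw [eq_sub_iff_add_eq',
    intervalIntegral.integral_interval_add_Ioi (hint x hx) (hint r (lt_of_lt_of_le hx hr.1))]

theorem bijOn_neg_integral_Ioi (hpos : ∀ x ∈ Ioi a, 0 < f x)
    (hint : ∀ x ∈ Ioi a, IntegrableOn f (Ioi x)) {b : ℝ} (hb : b ∈ Ioi a)
    (hdiv : Tendsto (fun r => ∫ s in Ioc r b, f s) (𝓝[>] a) atTop) :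
    BijOn (fun r => -∫ s in Ioi r, f s) (Ioi a) (Iio 0) := by
  refine ⟨fun x hx => neg_neg_iff_pos.2 (integral_Ioi_pos hpos hint hx),
    (strictAntiOn_integral_Ioi hpos hint).neg.injOn, fun y hy => ?_⟩
  obtain ⟨c, hcy, hc⟩ : ∃ c, ∫ s in Ioi c, f s < -y ∧ c ∈ Ioi a :=
    (((tendsto_integral_Ioi_zero tendsto_id).eventually (gt_mem_nhds (neg_pos.2 hy))).and
      (eventually_gt_atTop a)).exists
  obtain ⟨x, hxy, hx⟩ : ∃ x, -y < ∫ s in Ioi x, f s ∧ x ∈ Ioo a c :=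
    (((tendsto_integral_Ioi_nhdsGT hint hb hdiv).eventually_gt_atTop (-y)).and
      (Ioo_mem_nhdsGT hc)).exists
  obtain ⟨r, hr, hry⟩ := intermediate_value_Icc' hx.2.le
    (continuousOn_integral_Ioi hint hx.1 hx.2.le) ⟨hcy.le, hxy.le⟩
  exact ⟨r, lt_of_lt_of_le hx.1 hr.1, by simp only [hry, neg_neg]⟩

end IntegralIoi

lemma tendsto_integral_Ioc_atTop_of_le {g : ℝ → ℝ} {a b c : ℝ} (hc : 0 < c) (hab : a < b)
    (hint : ∀ r ∈ Ioo a b, IntegrableOn g (Ioc r b))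
    (hle : ∀ s ∈ Ioc a b, c * (s - a)⁻¹ ≤ g s) :
    Tendsto (fun r => ∫ s in Ioc r b, g s) (𝓝[>] a) atTop := by
  have hsub : Tendsto (fun r => r - a) (𝓝[>] a) (𝓝[>] 0) := by
    refine tendsto_nhdsWithin_of_tendsto_nhds_of_eventually_within _ ?_ ?_
    · exact ((continuous_sub_right a).tendsto' a 0 (sub_self a)).mono_left nhdsWithin_le_nhds
    · filter_upwards [self_mem_nhdsWithin] with r hr using sub_pos.2 (mem_Ioi.1 hr)
  have hlog : Tendsto (fun r => c * Real.log ((b - a) * (r - a)⁻¹)) (𝓝[>] a) atTop :=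
    (Real.tendsto_log_atTop.comp
      ((tendsto_inv_nhdsGT_zero.comp hsub).const_mul_atTop (sub_pos.2 hab))).const_mul_atTop hc
  refine tendsto_atTop_mono' _ ?_ hlog
  filter_upwards [Ioo_mem_nhdsGT hab] with r hr
  have hra : 0 < r - a := sub_pos.2 hr.1
  have hcont : ContinuousOn (fun s => c * (s - a)⁻¹) (Icc r b) :=
    continuousOn_const.mul ((continuousOn_id.sub continuousOn_const).inv₀
      fun s hs => (sub_pos.2 (hr.1.trans_le hs.1)).ne')
  calc c * Real.log ((b - a) * (r - a)⁻¹) = ∫ s in Ioc r b, c * (s - a)⁻¹ := by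
        rw [← intervalIntegral.integral_of_le hr.2.le, intervalIntegral.integral_const_mul,
          intervalIntegral.integral_comp_sub_right (fun x => x⁻¹),
          integral_inv_of_pos hra (sub_pos.2 hab), div_eq_mul_inv]
    _ ≤ ∫ s in Ioc r b, g s :=
        setIntegral_mono_on (hcont.integrableOn_Icc.mono_set Ioc_subset_Icc_self) (hint r hr)
          measurableSet_Ioc fun s hs => hle s ⟨hr.1.trans hs.1, hs.2⟩

section SAdS

variable {M l rS : ℝ}

lemma F_eq_of_root (hl : l ≠ 0) (hrS : rS ≠ 0) (hroot : F M l rS = 0) {s : ℝ} (hs : s ≠ 0) :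
    F M l s = (s - rS) * (s ^ 2 + s * rS + rS ^ 2 + l ^ 2) / (l ^ 2 * s) := by
  unfold F at hroot ⊢
  field_simp at hroot ⊢
  linear_combination hroot

lemma norm_inv_F_le (hl : l ≠ 0) {s : ℝ} (hs : 0 < s) (h : 2 * M ≤ s) :
    ‖(F M l s)⁻¹‖ ≤ l ^ 2 * s ^ (-2 : ℝ) := by
  have hF : s ^ 2 / l ^ 2 ≤ F M l s := by
    have : 2 * M / s ≤ 1 := (div_le_one hs).2 h
    unfold F
    linarith
  have hq : 0 < s ^ 2 / l ^ 2 := by positivity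
  rw [Real.norm_of_nonneg (inv_nonneg.2 (hq.trans_le hF).le), Real.rpow_neg hs.le, Real.rpow_two]
  calc (F M l s)⁻¹ ≤ (s ^ 2 / l ^ 2)⁻¹ := inv_anti₀ hq hF
    _ = l ^ 2 * (s ^ 2)⁻¹ := by rw [inv_div, div_eq_mul_inv]

lemma continuousOn_inv_F (hrS : 0 < rS) (hFpos : ∀ r, rS < r → 0 < F M l r) :
    ContinuousOn (fun s => (F M l s)⁻¹) (Ioi rS) := by
  refine ContinuousOn.inv₀ ?_ fun s hs => (hFpos s hs).ne'
  unfold F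
  exact (continuousOn_const.sub (continuousOn_const.div continuousOn_id
    fun s hs => (hrS.trans hs).ne')).add ((continuousOn_id.pow 2).div_const _)

lemma integrableOn_inv_F_Ioi (hl : l ≠ 0) (hrS : 0 < rS)
    (hFpos : ∀ r, rS < r → 0 < F M l r) {r₀ : ℝ} (h : rS < r₀) :
    IntegrableOn (fun s => (F M l s)⁻¹) (Ioi r₀) := by
  set K := max r₀ (2 * M)
  have hK : rS < K := h.trans_le (le_max_left _ _)
  have hK0 : 0 < K := hrS.trans hK
  rw [← Ioc_union_Ioi_eq_Ioi (le_max_left r₀ (2 * M)), integrableOn_union]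
  constructor
  · exact ((continuousOn_inv_F hrS hFpos).mono fun s hs => lt_of_lt_of_le h hs.1)
      |>.integrableOn_Icc.mono_set Ioc_subset_Icc_self
  · refine ((integrableOn_Ioi_rpow_of_lt (by norm_num : (-2 : ℝ) < -1) hK0).const_mul (l ^ 2)).mono'
      (((continuousOn_inv_F hrS hFpos).mono (Ioi_subset_Ioi hK.le)).aestronglyMeasurable
        measurableSet_Ioi) ?_
    filter_upwards [ae_restrict_mem measurableSet_Ioi] with s hs
    exact norm_inv_F_le hl (hK0.trans hs) ((le_max_right _ _).trans hs.le)

/-- The constant is `l² r_SAdS / Q(r₀)`, with `Q(s) = s² + s r_SAdS + r_SAdS² + l²` the increasing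
cofactor of `s - r_SAdS` in `l² s F(s)`. -/
lemma mul_inv_sub_le_inv_F (hl : l ≠ 0) (hrS : 0 < rS) (hroot : F M l rS = 0) {r₀ s : ℝ}
    (hs : s ∈ Ioc rS r₀) :
    l ^ 2 * rS / (r₀ ^ 2 + r₀ * rS + rS ^ 2 + l ^ 2) * (s - rS)⁻¹ ≤ (F M l s)⁻¹ := by
  have hs0 : 0 < s := hrS.trans hs.1
  have hsub : 0 < s - rS := sub_pos.2 hs.1
  have hl2 : 0 < l ^ 2 := by positivity
  rw [F_eq_of_root hl hrS.ne' hroot hs0.ne', inv_div, ← div_eq_mul_inv, div_div,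
    mul_comm _ (s - rS)]
  refine div_le_div₀ (by positivity) (mul_le_mul_of_nonneg_left hs.1.le hl2.le) (by positivity)
    (mul_le_mul_of_nonneg_left ?_ hsub.le)
  nlinarith [hs.2, hs0]

lemma tendsto_integral_Ioc_inv_F (hl : l ≠ 0) (hrS : 0 < rS) (hroot : F M l rS = 0)
    (hFpos : ∀ r, rS < r → 0 < F M l r) {r₀ : ℝ} (h : rS < r₀) :
    Tendsto (fun r => ∫ s in Ioc r r₀, (F M l s)⁻¹) (𝓝[>] rS) atTop :=
  tendsto_integral_Ioc_atTop_of_le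
    (by have hr₀ : 0 < r₀ := hrS.trans h; positivity) h
    (fun r hr => (integrableOn_inv_F_Ioi hl hrS hFpos hr.1).mono_set Ioc_subset_Ioi_self)
    fun s hs => mul_inv_sub_le_inv_F hl hrS hroot hs

end SAdS

theorem stmt_1_general (M l : ℝ) (hl : 0 < l)
    (rSAdS : ℝ) (hrS : 0 < rSAdS) (hroot : F M l rSAdS = 0)
    (hFpos : ∀ r, rSAdS < r → 0 < F M l r) :
    (∀ r₀, rSAdS < r₀ → IntegrableOn (fun s => (F M l s)⁻¹) (Set.Ioi r₀)) ∧
    (∀ r₀, rSAdS < r₀ →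
      Tendsto (fun r => ∫ s in Set.Ioc r r₀, (F M l s)⁻¹)
        (nhdsWithin rSAdS (Set.Ioi rSAdS)) atTop) ∧
    StrictMonoOn (fun r => -∫ s in Set.Ioi r, (F M l s)⁻¹) (Set.Ioi rSAdS) ∧
    Set.BijOn (fun r => -∫ s in Set.Ioi r, (F M l s)⁻¹)
      (Set.Ioi rSAdS) (Set.Iio 0) := by
  have hpos : ∀ s ∈ Ioi rSAdS, 0 < (F M l s)⁻¹ := fun s hs => inv_pos.2 (hFpos s hs)
  have hint : ∀ r₀ ∈ Ioi rSAdS, IntegrableOn (fun s => (F M l s)⁻¹) (Ioi r₀) :=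
    fun r₀ h => integrableOn_inv_F_Ioi hl.ne' hrS hFpos h
  have hdiv : ∀ r₀ ∈ Ioi rSAdS,
      Tendsto (fun r => ∫ s in Ioc r r₀, (F M l s)⁻¹) (𝓝[>] rSAdS) atTop :=
    fun r₀ h => tendsto_integral_Ioc_inv_F hl.ne' hrS hroot hFpos h
  exact ⟨hint, hdiv, (strictAntiOn_integral_Ioi hpos hint).neg,
    bijOn_neg_integral_Ioi hpos hint (lt_add_one rSAdS) (hdiv _ (lt_add_one rSAdS))⟩

/-- For every `r₀ > r_SAdS`, `s ↦ 1/F(s)` is integrable on `(r₀,∞)`;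
`∫_r^{r₀} F(s)⁻¹ ds → +∞` as `r → r_SAdS⁺`; consequently
`r ↦ −∫_r^∞ F(s)⁻¹ ds` is a strictly increasing bijection from `(r_SAdS,∞)`
onto `(−∞,0)`. -/
theorem stmt_1 (M l : ℝ) (hM : 0 < M) (hl : 0 < l)
    (rSAdS : ℝ) (hrS : 0 < rSAdS) (hroot : F M l rSAdS = 0)
    (huniq : ∀ r, 0 < r → F M l r = 0 → r = rSAdS)
    (hFpos : ∀ r, rSAdS < r → 0 < F M l r) :
    (∀ r₀, rSAdS < r₀ → IntegrableOn (fun s => (F M l s)⁻¹) (Set.Ioi r₀)) ∧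
    (∀ r₀, rSAdS < r₀ →
      Tendsto (fun r => ∫ s in Set.Ioc r r₀, (F M l s)⁻¹)
        (nhdsWithin rSAdS (Set.Ioi rSAdS)) atTop) ∧
    StrictMonoOn (fun r => -∫ s in Set.Ioi r, (F M l s)⁻¹) (Set.Ioi rSAdS) ∧
    Set.BijOn (fun r => -∫ s in Set.Ioi r, (F M l s)⁻¹)
      (Set.Ioi rSAdS) (Set.Iio 0) :=
  stmt_1_general M l hl rSAdS hrS hroot hFpos
end

section
/- For every r ≥ r_SAdS one has (r − r_SAdS)² ≤ l² F(r). Consequently, with Y(r) = h (r − r_SAdS)/(2l² F(r)) for any h > 0, one has F(r)² Y(r)² − h² F(r)/(2l²) ≤ − h² F(r)/(4l²) for all r > r_SAdS. -/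
/-- For every `r ≥ r_SAdS`, `(r − r_SAdS)² ≤ l² F(r)`. Consequently, with
`Y(r) = h (r − r_SAdS)/(2l² F(r))` for any `h > 0`, one has
`F(r)² Y(r)² − h² F(r)/(2l²) ≤ − h² F(r)/(4l²)` for all `r > r_SAdS`. -/
theorem stmt_2 (M l : ℝ) (hM : 0 < M) (hl : 0 < l)
    (rSAdS : ℝ) (hrS : 0 < rSAdS) (hroot : F M l rSAdS = 0)
    (huniq : ∀ r, 0 < r → F M l r = 0 → r = rSAdS)
    (hFpos : ∀ r, rSAdS < r → 0 < F M l r) :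
    (∀ r, rSAdS ≤ r → (r - rSAdS)^2 ≤ l^2 * F M l r) ∧
    (∀ h, 0 < h → ∀ r, rSAdS < r →
      (F M l r)^2 * (h * (r - rSAdS) / (2*l^2 * F M l r))^2
          - h^2 * F M l r / (2*l^2)
        ≤ -(h^2 * F M l r / (4*l^2))) := by
  have hl2 : (0:ℝ) < l^2 := by positivity
  have hlne : l ≠ 0 := ne_of_gt hl
  have hroot' : rSAdS*l^2 - 2*M*l^2 + rSAdS^3 = 0 := by
    have h0 := hroot
    unfold F at h0
    field_simp at h0
    nlinarith [h0]
  have part1 : ∀ r, rSAdS ≤ r → (r - rSAdS)^2 ≤ l^2 * F M l r := by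
    intro r hr
    have hrpos : 0 < r := lt_of_lt_of_le hrS hr
    have h2 : l^2 * F M l r = (r*l^2 - 2*M*l^2 + r^3)/r := by
      unfold F; field_simp
    rw [h2, le_div_iff₀ hrpos]
    nlinarith [hroot', mul_nonneg (mul_nonneg (sub_nonneg.mpr hr) (sub_nonneg.mpr hr)) hrpos.le,
      mul_nonneg (sub_nonneg.mpr hr) hl2.le,
      mul_nonneg (sub_nonneg.mpr hr) (mul_pos hrpos hrS).le]
  refine ⟨part1, ?_⟩
  intro h hh r hr
  have hF := hFpos r hr
  have h1 := part1 r hr.le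
  have hFne : F M l r ≠ 0 := ne_of_gt hF
  have key : (F M l r)^2 * (h * (r - rSAdS) / (2*l^2 * F M l r))^2
      = h^2 * (r - rSAdS)^2 / (4*l^4) := by
    field_simp
    ring
  rw [key]
  rw [div_sub_div _ _ (by positivity : (4:ℝ)*l^4 ≠ 0) (by positivity : (2:ℝ)*l^2 ≠ 0),
    ← neg_div, div_le_div_iff₀ (by positivity) (by positivity)]
  nlinarith [mul_le_mul_of_nonneg_left h1 (by positivity : (0:ℝ) ≤ h^2*l^2), hl2, hF,
    mul_pos hl2 hF, sq_nonneg h]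
end

section
/- As x → 0⁻ one has A(x) = 1/l + x²/(2l³) + o(x²) and B(x) = −l/x − x/(6l) + o(x); that is, lim_{x→0⁻} (A(x) − 1/l − x²/(2l³))/x² = 0 and lim_{x→0⁻} (B(x) + l/x + x/(6l))/x = 0. -/
/-!
Put `u = 1/r`. Expanding `1/F(s) = l²/s² - l⁴/s⁴ + O(s⁻⁵)` and integrating gives
`-x = l²u - l⁴u³/3 + O(u⁴)`, while the crude bound `1/F(s) ≥ l²/(2s²)` for `s ≥ l` gives
`u = O(x)`. Reverting the series yields `u = -x/l² - x³/(3l⁴) + o(x³)`. Since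
`A = √(1/l² + u² - 2Mu³)` and `B = A/u`, both expansions then follow by limit algebra.
-/

open MeasureTheory Filter Set Topology

noncomputable def A (M l : ℝ) (rfun : ℝ → ℝ) (x : ℝ) : ℝ :=
  Real.sqrt (F M l (rfun x)) / rfun x

noncomputable def B (M l : ℝ) (rfun : ℝ → ℝ) (x : ℝ) : ℝ :=
  Real.sqrt (F M l (rfun x))

theorem integrableOn_Ioi_inv_pow_succ {n : ℕ} (hn : n ≠ 0) {r : ℝ} (hr : 0 < r) :
    IntegrableOn (fun s : ℝ => (s ^ (n + 1))⁻¹) (Ioi r) := by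
  refine (integrableOn_Ioi_rpow_of_lt (a := -((n : ℝ) + 1)) ?_ hr).congr_fun
    (fun s hs => ?_) measurableSet_Ioi
  · have : (0 : ℝ) < n := by positivity
    linarith
  · dsimp only
    rw [Real.rpow_neg (hr.trans hs).le, ← Nat.cast_add_one, Real.rpow_natCast]

theorem integral_Ioi_inv_pow_succ {n : ℕ} (hn : n ≠ 0) {r : ℝ} (hr : 0 < r) :
    ∫ s in Ioi r, (s ^ (n + 1))⁻¹ = (n * r ^ n)⁻¹ := by
  have hpow : EqOn (fun s : ℝ => (s ^ (n + 1))⁻¹) (fun s => s ^ (-((n : ℝ) + 1))) (Ioi r) :=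
    fun s hs => by
      dsimp only
      rw [Real.rpow_neg (hr.trans hs).le, ← Nat.cast_add_one, Real.rpow_natCast]
  have : (0 : ℝ) < n := by positivity
  rw [setIntegral_congr_fun measurableSet_Ioi hpow, integral_Ioi_rpow_of_lt (by linarith) hr,
    show -((n : ℝ) + 1) + 1 = -n by ring, Real.rpow_neg hr.le, Real.rpow_natCast]
  field_simp

theorem abs_sub_sub_mul_cube_le {c K p v : ℝ} (hc : 0 ≤ c) (hK : 0 ≤ K) (hp : 0 ≤ p)
    (hpv : p ≤ 2*v) (hv : v ≤ 1) (h : |v - p + c*p^3| ≤ K*p^4) :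
    |p - v - c*v^3| ≤ (7*c*(8*c + 16*K) + 16*K) * v^4 := by
  have hv0 : 0 ≤ v := by linarith
  have hp3 : p^3 ≤ 8*v^3 := (pow_le_pow_left₀ hp hpv 3).trans_eq (by ring)
  have hp4 : p^4 ≤ 16*v^4 := (pow_le_pow_left₀ hp hpv 4).trans_eq (by ring)
  have hv43 : v^4 ≤ v^3 := pow_le_pow_of_le_one hv0 hv (by norm_num)
  have hv54 : v^5 ≤ v^4 := pow_le_pow_of_le_one hv0 hv (by norm_num)
  have hlin : |p - v| ≤ (8*c + 16*K) * v^3 :=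
    calc |p - v| = |c*p^3 - (v - p + c*p^3)| := by ring_nf
      _ ≤ |c*p^3| + |v - p + c*p^3| := abs_sub _ _
      _ ≤ c*(8*v^3) + K*(16*v^4) := by
          rw [abs_of_nonneg (by positivity)]
          gcongr
          exact h.trans (by gcongr)
      _ ≤ (8*c + 16*K) * v^3 := by nlinarith
  have hcube : |p^3 - v^3| ≤ 7*(8*c + 16*K) * v^4 := by
    have hq : p^2 + p*v + v^2 ≤ 7*v^2 := by nlinarith
    calc |p^3 - v^3| = |p - v| * (p^2 + p*v + v^2) := by
          rw [show p^3 - v^3 = (p - v) * (p^2 + p*v + v^2) by ring, abs_mul,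
            abs_of_nonneg (by positivity : 0 ≤ p^2 + p*v + v^2)]
      _ ≤ (8*c + 16*K) * v^3 * (7*v^2) := by gcongr
      _ = 7*(8*c + 16*K) * v^5 := by ring
      _ ≤ 7*(8*c + 16*K) * v^4 := by gcongr
  calc |p - v - c*v^3| = |c*(p^3 - v^3) - (v - p + c*p^3)| := by ring_nf
    _ ≤ c*|p^3 - v^3| + |v - p + c*p^3| :=
        (abs_sub _ _).trans_eq (by rw [abs_mul, abs_of_nonneg hc])
    _ ≤ c*(7*(8*c + 16*K) * v^4) + K*(16*v^4) := by gcongr; exact h.trans (by gcongr)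
    _ = (7*c*(8*c + 16*K) + 16*K) * v^4 := by ring

section Expansion

variable {l : ℝ} {u : ℝ → ℝ}

theorem eventually_ne_zero_nhdsLT : ∀ᶠ x : ℝ in 𝓝[<] 0, x ≠ 0 :=
  eventually_mem_nhdsWithin.mono fun _ hx => ne_of_lt hx

theorem tendsto_div_self_of_expansion (hl : l ≠ 0)
    (hw : Tendsto (fun x => (u x + x/l^2 + x^3/(3*l^4))/x^3) (𝓝[<] 0) (𝓝 0)) :
    Tendsto (fun x => u x / x) (𝓝[<] 0) (𝓝 (-(1/l^2))) := by
  have hsq : Tendsto (fun x : ℝ => x^2) (𝓝[<] 0) (𝓝 0) := by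
    simpa using ((continuous_pow 2).tendsto (0 : ℝ)).mono_left nhdsWithin_le_nhds
  have hlim := (tendsto_const_nhds (x := -(1/l^2))).sub (hsq.div_const (3*l^4)) |>.add
    (hsq.mul hw)
  rw [zero_div, mul_zero, sub_zero, add_zero] at hlim
  refine hlim.congr' ?_
  filter_upwards [eventually_ne_zero_nhdsLT] with x hx
  field_simp
  ring

theorem tendsto_sqrt_expansion (M : ℝ) (hl : 0 < l)
    (hw : Tendsto (fun x => (u x + x/l^2 + x^3/(3*l^4))/x^3) (𝓝[<] 0) (𝓝 0)) :
    Tendsto (fun x => (√(1/l^2 + u x^2 - 2*M*u x^3) - 1/l - x^2/(2*l^3))/x^2)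
      (𝓝[<] 0) (𝓝 0) := by
  have hq := tendsto_div_self_of_expansion hl.ne' hw
  have hu : Tendsto u (𝓝[<] 0) (𝓝 0) := by
    have := hq.mul (tendsto_id.mono_left nhdsWithin_le_nhds)
    rw [mul_zero] at this
    refine this.congr' ?_
    filter_upwards [eventually_ne_zero_nhdsLT] with x hx
    exact div_mul_cancel₀ _ hx
  have hQ : Tendsto (fun x => 1/l^2 + u x^2 - 2*M*u x^3) (𝓝[<] 0) (𝓝 (1/l^2)) := by
    simpa using (tendsto_const_nhds.add (hu.pow 2)).sub ((hu.pow 3).const_mul (2*M))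
  have hS : Tendsto (fun x => √(1/l^2 + u x^2 - 2*M*u x^3)) (𝓝[<] 0) (𝓝 (1/l)) := by
    have := hQ.sqrt
    rwa [Real.sqrt_div' _ (sq_nonneg l), Real.sqrt_one, Real.sqrt_sq hl.le] at this
  have hlim := ((hq.pow 2).sub ((hu.const_mul (2*M)).mul (hq.pow 2))).div
    (hS.add_const (1/l)) (by positivity) |>.sub_const (1/(2*l^3))
  have hval : ((-(1/l^2))^2 - 2*M*0*(-(1/l^2))^2)/(1/l + 1/l) - 1/(2*l^3) = 0 := by
    field_simp
    ring
  rw [hval] at hlim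
  refine hlim.congr' ?_
  filter_upwards [eventually_ne_zero_nhdsLT,
    hQ.eventually (lt_mem_nhds (by positivity))] with x hx hQx
  have hS2 := Real.sq_sqrt hQx.le
  have hS0 : 0 < √(1/l^2 + u x^2 - 2*M*u x^3) + 1/l := by positivity
  have hconj : √(1/l^2 + u x^2 - 2*M*u x^3) - 1/l
      = (u x^2 - 2*M*u x^3) / (√(1/l^2 + u x^2 - 2*M*u x^3) + 1/l) := by
    rw [eq_div_iff hS0.ne']
    linear_combination hS2
  simp only [Pi.div_apply]
  rw [sub_div, hconj]
  field_simp

theorem tendsto_sqrt_div_expansion (M : ℝ) (hl : 0 < l)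
    (hw : Tendsto (fun x => (u x + x/l^2 + x^3/(3*l^4))/x^3) (𝓝[<] 0) (𝓝 0)) :
    Tendsto (fun x => (√(1/l^2 + u x^2 - 2*M*u x^3) / u x + l/x + x/(6*l))/x)
      (𝓝[<] 0) (𝓝 0) := by
  have hq := tendsto_div_self_of_expansion hl.ne' hw
  have hq0 : -(1/l^2) ≠ 0 := by simp [hl.ne']
  have hlim := ((tendsto_sqrt_expansion M hl hw).add_const (1/(6*l^3)) |>.add
    (hw.const_mul l)).div hq hq0 |>.add_const (1/(6*l))
  have hval : (0 + 1/(6*l^3) + l*0)/(-(1/l^2)) + 1/(6*l) = 0 := by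
    field_simp
    ring
  rw [hval] at hlim
  refine hlim.congr' ?_
  filter_upwards [eventually_ne_zero_nhdsLT, hq.eventually_ne hq0] with x hx hqx
  have hux : u x ≠ 0 := (div_ne_zero_iff.1 hqx).1
  simp only [Pi.div_apply]
  generalize √(1/l^2 + u x^2 - 2*M*u x^3) = S
  field_simp
  ring

theorem tendsto_expansion_of_abs_le {K : ℝ} (hl : l ≠ 0)
    (h : ∀ᶠ x in 𝓝[<] 0, |l^2 * u x + x + x^3/(3*l^2)| ≤ K * x^4) :
    Tendsto (fun x => (u x + x/l^2 + x^3/(3*l^4))/x^3) (𝓝[<] 0) (𝓝 0) := by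
  have hbound : Tendsto (fun x : ℝ => K/l^2 * |x|) (𝓝[<] 0) (𝓝 0) := by
    simpa using ((continuous_abs.const_mul (K/l^2)).tendsto (0 : ℝ)).mono_left
      nhdsWithin_le_nhds
  refine squeeze_zero_norm' ?_ hbound
  filter_upwards [h, eventually_ne_zero_nhdsLT] with x hx hx0
  have hw : (u x + x/l^2 + x^3/(3*l^4))/x^3
      = (l^2 * u x + x + x^3/(3*l^2)) / (l^2 * x^3) := by
    field_simp
  calc ‖(u x + x/l^2 + x^3/(3*l^4))/x^3‖
      = |l^2 * u x + x + x^3/(3*l^2)| / (l^2 * |x|^3) := by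
        rw [Real.norm_eq_abs, hw, abs_div, abs_mul, abs_pow, abs_pow, sq_abs]
    _ ≤ K * x^4 / (l^2 * |x|^3) := by gcongr
    _ = K/l^2 * |x| := by
        rw [← (by decide : Even 4).pow_abs]
        field_simp

end Expansion

section Tail

variable {M l : ℝ}

theorem inv_F_eq (hl : l ≠ 0) {s : ℝ} (hs : s ≠ 0) :
    (F M l s)⁻¹ = l^2 * s / (s^3 + l^2*s - 2*M*l^2) := by
  rw [F, ← inv_div]
  field_simp
  ring

theorem abs_inv_F_sub_le (hM : 0 ≤ M) (hl : l ≠ 0) {s : ℝ} (hs : 1 ≤ s) (hsM : 2*M ≤ s) :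
    |(F M l s)⁻¹ - (l^2 * (s^2)⁻¹ - l^4 * (s^4)⁻¹)|
      ≤ (2*M*l^4 + l^6 + 2*M*l^6) * (s^5)⁻¹ := by
  have hs0 : 0 < s := by linarith
  set D := s^3 + l^2*s - 2*M*l^2 with hD
  have hDs : s^3 ≤ D := by nlinarith [sq_nonneg l]
  have hD0 : 0 < D := (pow_pos hs0 3).trans_le hDs
  have hdiff : (F M l s)⁻¹ - (l^2 * (s^2)⁻¹ - l^4 * (s^4)⁻¹)
      = (2*M*l^4*s^2 + l^6*s - 2*M*l^6) / (s^4 * D) := by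
    rw [inv_F_eq hl hs0.ne', ← hD]
    field_simp
    ring
  have hnum : |2*M*l^4*s^2 + l^6*s - 2*M*l^6| ≤ (2*M*l^4 + l^6 + 2*M*l^6) * s^2 := by
    have hs2 : s ≤ s^2 := by nlinarith
    rw [abs_le]
    constructor <;> nlinarith [pow_nonneg (sq_nonneg l) 3,
      mul_nonneg hM (pow_nonneg (sq_nonneg l) 2), mul_nonneg hM (pow_nonneg (sq_nonneg l) 3)]
  rw [hdiff, abs_div, abs_of_pos (by positivity : 0 < s^4 * D), div_le_iff₀ (by positivity)]
  calc |2*M*l^4*s^2 + l^6*s - 2*M*l^6| ≤ (2*M*l^4 + l^6 + 2*M*l^6) * s^2 := hnum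
    _ = (2*M*l^4 + l^6 + 2*M*l^6) * (s^5)⁻¹ * (s^4 * s^3) := by field_simp
    _ ≤ (2*M*l^4 + l^6 + 2*M*l^6) * (s^5)⁻¹ * (s^4 * D) := by gcongr

variable (l) in
theorem integrableOn_leading_inv_F {r : ℝ} (hr : 0 < r) :
    IntegrableOn (fun s : ℝ => l^2 * (s^2)⁻¹ - l^4 * (s^4)⁻¹) (Ioi r) :=
  ((integrableOn_Ioi_inv_pow_succ one_ne_zero hr).const_mul _).sub
    ((integrableOn_Ioi_inv_pow_succ three_ne_zero hr).const_mul _)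

theorem integrableOn_inv_F (hM : 0 ≤ M) (hl : l ≠ 0) {r : ℝ} (hr : 1 ≤ r)
    (hrM : 2*M ≤ r) :
    IntegrableOn (fun s => (F M l s)⁻¹) (Ioi r) := by
  have hr0 : 0 < r := by linarith
  have hmain := integrableOn_leading_inv_F l hr0
  have hrem :
      IntegrableOn (fun s => (F M l s)⁻¹ - (l^2 * (s^2)⁻¹ - l^4 * (s^4)⁻¹)) (Ioi r) := by
    refine Integrable.mono' ((integrableOn_Ioi_inv_pow_succ four_ne_zero hr0).const_mul
      (2*M*l^4 + l^6 + 2*M*l^6)) (by unfold F; fun_prop) ?_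
    filter_upwards [ae_restrict_mem measurableSet_Ioi] with s hs
    exact abs_inv_F_sub_le hM hl (hr.trans hs.le) (hrM.trans hs.le)
  exact (hrem.add hmain).congr_fun (fun s _ => sub_add_cancel _ _) measurableSet_Ioi

theorem abs_integral_inv_F_sub_le (hM : 0 ≤ M) (hl : l ≠ 0) {r : ℝ} (hr : 1 ≤ r)
    (hrM : 2*M ≤ r) :
    |(∫ s in Ioi r, (F M l s)⁻¹) - (l^2 * r⁻¹ - l^4/3 * r⁻¹^3)|
      ≤ (2*M*l^4 + l^6 + 2*M*l^6)/4 * r⁻¹^4 := by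
  have hr0 : 0 < r := by linarith
  have h2 := integral_Ioi_inv_pow_succ one_ne_zero hr0
  have h4 := integral_Ioi_inv_pow_succ three_ne_zero hr0
  have h5 := integral_Ioi_inv_pow_succ four_ne_zero hr0
  norm_num at h2 h4 h5
  calc |(∫ s in Ioi r, (F M l s)⁻¹) - (l^2 * r⁻¹ - l^4/3 * r⁻¹^3)|
      = ‖∫ s in Ioi r, ((F M l s)⁻¹ - (l^2 * (s^2)⁻¹ - l^4 * (s^4)⁻¹))‖ := by
        rw [integral_sub (integrableOn_inv_F hM hl hr hrM) (integrableOn_leading_inv_F l hr0),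
          integral_sub ((integrableOn_Ioi_inv_pow_succ one_ne_zero hr0).const_mul _)
            ((integrableOn_Ioi_inv_pow_succ three_ne_zero hr0).const_mul _),
          integral_const_mul, integral_const_mul, h2, h4, Real.norm_eq_abs]
        ring_nf
    _ ≤ ∫ s in Ioi r, (2*M*l^4 + l^6 + 2*M*l^6) * (s^5)⁻¹ := by
        refine norm_integral_le_of_norm_le
          ((integrableOn_Ioi_inv_pow_succ four_ne_zero hr0).const_mul _) ?_
        filter_upwards [ae_restrict_mem measurableSet_Ioi] with s hs
        exact abs_inv_F_sub_le hM hl (hr.trans hs.le) (hrM.trans hs.le)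
    _ = (2*M*l^4 + l^6 + 2*M*l^6)/4 * r⁻¹^4 := by
        rw [integral_const_mul, h5]
        ring

theorem le_inv_F (hM : 0 ≤ M) (hl : 0 < l) {s : ℝ} (hls : l ≤ s) (hF : 0 < F M l s) :
    l^2/2 * (s^2)⁻¹ ≤ (F M l s)⁻¹ := by
  have hs : 0 < s := hl.trans_le hls
  have hFle : F M l s ≤ 2 * s^2 / l^2 := by
    have : 1 ≤ s^2 / l^2 := by
      rw [one_le_div (by positivity)]
      nlinarith
    have : 0 ≤ 2*M/s := by positivity
    rw [F]
    linarith [show 2 * s^2 / l^2 = s^2/l^2 + s^2/l^2 by ring]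
  calc l^2/2 * (s^2)⁻¹ = (2 * s^2 / l^2)⁻¹ := by field_simp
    _ ≤ (F M l s)⁻¹ := inv_anti₀ hF hFle

theorem le_integral_inv_F (hM : 0 ≤ M) (hl : 0 < l) {r : ℝ} (hF : ∀ s, r < s → 0 < F M l s)
    (hint : IntegrableOn (fun s => (F M l s)⁻¹) (Ioi r)) :
    l^2/2 * (max r l)⁻¹ ≤ ∫ s in Ioi r, (F M l s)⁻¹ := by
  have hm : 0 < max r l := hl.trans_le (le_max_right _ _)
  have hsub : Ioi (max r l) ⊆ Ioi r := Ioi_subset_Ioi (le_max_left _ _)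
  have h2 := integral_Ioi_inv_pow_succ one_ne_zero hm
  norm_num at h2
  calc l^2/2 * (max r l)⁻¹ = ∫ s in Ioi (max r l), l^2/2 * (s^2)⁻¹ := by
        rw [integral_const_mul, h2]
    _ ≤ ∫ s in Ioi (max r l), (F M l s)⁻¹ := by
        refine setIntegral_mono_on ((integrableOn_Ioi_inv_pow_succ one_ne_zero hm).const_mul _)
          (hint.mono_set hsub) measurableSet_Ioi fun s hs => ?_
        exact le_inv_F hM hl ((le_max_right _ _).trans hs.le) (hF s (hsub hs))
    _ ≤ ∫ s in Ioi r, (F M l s)⁻¹ := by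
        refine setIntegral_mono_set hint ?_ hsub.eventuallyLE
        filter_upwards [ae_restrict_mem measurableSet_Ioi] with s hs
        exact (inv_pos.2 (hF s hs)).le

theorem lt_and_inv_le_of_integral_inv_F_eq (hM : 0 ≤ M) (hl : 0 < l) {r v : ℝ}
    (hF : ∀ s, r < s → 0 < F M l s) (hv : ∫ s in Ioi r, (F M l s)⁻¹ = v) (hv0 : 0 < v)
    (hvl : v < l/2) : l < r ∧ r⁻¹ ≤ 2*v/l^2 := by
  -- otherwise the integral would take the junk value `0 ≠ v`
  have hint : IntegrableOn (fun s => (F M l s)⁻¹) (Ioi r) := by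
    by_contra h
    rw [integral_undef h] at hv
    linarith
  have hlow := le_integral_inv_F hM hl hF hint
  rw [hv] at hlow
  have hlr : l < r := by
    by_contra! h
    rw [max_eq_right h] at hlow
    have : l^2/2 * l⁻¹ = l/2 := by field_simp
    linarith
  rw [max_eq_left hlr.le] at hlow
  refine ⟨hlr, ?_⟩
  rw [le_div_iff₀ (by positivity)]
  linarith

theorem sqrt_F_div_eq {r : ℝ} (hl : l ≠ 0) (hr : 0 < r) :
    √(F M l r) / r = √(1/l^2 + r⁻¹^2 - 2*M*r⁻¹^3) :=
  calc √(F M l r) / r = √(F M l r) / √(r^2) := by rw [Real.sqrt_sq hr.le]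
    _ = √(F M l r / r^2) := (Real.sqrt_div' _ (sq_nonneg r)).symm
    _ = √(1/l^2 + r⁻¹^2 - 2*M*r⁻¹^3) := by
        rw [F]
        congr 1
        field_simp
        ring

theorem exists_eventually_abs_expansion_le (hM : 0 ≤ M) (hl : 0 < l) {rfun : ℝ → ℝ}
    (hF : ∀ x < 0, ∀ s, rfun x < s → 0 < F M l s)
    (hinv : ∀ x < 0, ∫ s in Ioi (rfun x), (F M l s)⁻¹ = -x) :
    ∃ K, ∀ᶠ x in 𝓝[<] 0,
      l < rfun x ∧ |l^2 * (rfun x)⁻¹ + x + x^3/(3*l^2)| ≤ K * x^4 := by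
  set R := max 1 (2*M)
  have hR : 0 < R := lt_max_of_lt_left one_pos
  have hδ : 0 < min (l/2) (min 1 (l^2/(2*R))) := by positivity
  obtain ⟨c, hc⟩ : ∃ c : ℝ, c = 1/(3*l^2) := ⟨_, rfl⟩
  obtain ⟨K₀, hK₀⟩ : ∃ K₀ : ℝ, K₀ = (2*M*l^4 + l^6 + 2*M*l^6)/(4*l^8) := ⟨_, rfl⟩
  refine ⟨7*c*(8*c + 16*K₀) + 16*K₀, ?_⟩
  filter_upwards [Ioo_mem_nhdsLT (neg_lt_zero.2 hδ)] with x ⟨hxδ, hx0⟩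
  simp only [neg_lt, lt_min_iff] at hxδ
  obtain ⟨hxl, hx1, hxR⟩ := hxδ
  obtain ⟨hlr, hinv_le⟩ :=
    lt_and_inv_le_of_integral_inv_F_eq hM hl (hF x hx0) (hinv x hx0) (by linarith) hxl
  have hr0 : 0 < rfun x := hl.trans hlr
  have hRr : R ≤ rfun x := by
    rw [← inv_le_inv₀ hr0 hR]
    calc (rfun x)⁻¹ ≤ 2*(-x)/l^2 := hinv_le
      _ ≤ 2*(l^2/(2*R))/l^2 := by gcongr
      _ = R⁻¹ := by field_simp
  have htail := abs_integral_inv_F_sub_le hM hl.ne' ((le_max_left _ _).trans hRr)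
    ((le_max_right _ _).trans hRr)
  rw [hinv x hx0] at htail
  have hrev : |l^2 * (rfun x)⁻¹ - -x - c*(-x)^3| ≤ (7*c*(8*c + 16*K₀) + 16*K₀) * (-x)^4 := by
    refine abs_sub_sub_mul_cube_le (by rw [hc]; positivity) (by rw [hK₀]; positivity)
      (by positivity) (by rwa [← le_div_iff₀' (by positivity)]) hx1.le ?_
    convert htail using 1
    · rw [hc]
      congr 1
      field_simp
      ring
    · rw [hK₀]
      field_simp
  refine ⟨hlr, ?_⟩
  convert hrev using 2 <;> (try rw [hc]) <;> ring

end Tail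

theorem stmt_4_general (M l : ℝ) (hM : 0 < M) (hl : 0 < l)
    (rSAdS : ℝ)
    (hFpos : ∀ r, rSAdS < r → 0 < F M l r)
    (rfun : ℝ → ℝ)
    (hrange : ∀ x, x < 0 → rSAdS < rfun x)
    (hinv1 : ∀ x, x < 0 → -(∫ s in Set.Ioi (rfun x), (F M l s)⁻¹) = x) :
    Tendsto (fun x => (A M l rfun x - 1/l - x^2/(2*l^3)) / x^2)
      (nhdsWithin 0 (Set.Iio 0)) (nhds 0) ∧
    Tendsto (fun x => (B M l rfun x + l/x + x/(6*l)) / x)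
      (nhdsWithin 0 (Set.Iio 0)) (nhds 0) := by
  obtain ⟨K, hK⟩ := exists_eventually_abs_expansion_le hM.le hl
    (fun x hx s hs => hFpos s ((hrange x hx).trans hs))
    (fun x hx => neg_eq_iff_eq_neg.1 (hinv1 x hx))
  have hw := tendsto_expansion_of_abs_le (u := fun x => (rfun x)⁻¹) hl.ne'
    (hK.mono fun _ hx => hx.2)
  have hA : ∀ᶠ x in 𝓝[<] 0,
      A M l rfun x = √(1/l^2 + (rfun x)⁻¹^2 - 2*M*(rfun x)⁻¹^3) :=
    hK.mono fun x hx => sqrt_F_div_eq hl.ne' (hl.trans hx.1)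
  constructor
  · refine (tendsto_sqrt_expansion M hl hw).congr' ?_
    filter_upwards [hA] with x hx
    rw [hx]
  · refine (tendsto_sqrt_div_expansion M hl hw).congr' ?_
    filter_upwards [hA, hK] with x hAx hx
    rw [← hAx, A, B, div_inv_eq_mul, div_mul_cancel₀ _ (hl.trans hx.1).ne']

/-- As `x → 0⁻`, `A(x) = 1/l + x²/(2l³) + o(x²)` and
`B(x) = −l/x − x/(6l) + o(x)`. -/
theorem stmt_4 (M l : ℝ) (hM : 0 < M) (hl : 0 < l)
    (rSAdS : ℝ) (hrS : 0 < rSAdS) (hroot : F M l rSAdS = 0)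
    (hFpos : ∀ r, rSAdS < r → 0 < F M l r)
    (hbij : Set.BijOn (fun r => -∫ s in Set.Ioi r, (F M l s)⁻¹)
      (Set.Ioi rSAdS) (Set.Iio 0))
    (rfun : ℝ → ℝ)
    (hrange : ∀ x, x < 0 → rSAdS < rfun x)
    (hinv1 : ∀ x, x < 0 → -(∫ s in Set.Ioi (rfun x), (F M l s)⁻¹) = x)
    (hinv2 : ∀ r, rSAdS < r → rfun (-(∫ s in Set.Ioi r, (F M l s)⁻¹)) = r) :
    Tendsto (fun x => (A M l rfun x - 1/l - x^2/(2*l^3)) / x^2)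
      (nhdsWithin 0 (Set.Iio 0)) (nhds 0) ∧
    Tendsto (fun x => (B M l rfun x + l/x + x/(6*l)) / x)
      (nhdsWithin 0 (Set.Iio 0)) (nhds 0) :=
  stmt_4_general M l hM hl rSAdS hFpos rfun hrange hinv1
end

section
/- Suppose 2ml ≠ 3. Let ε > 0, let B : [−ε, 0) → ℝ be continuous with sup_{x ∈ [−ε,0)} |B(x) + l/x| < ∞, and let g : [−ε, 0) → ℂ be continuous with |g(x)| ≤ C₀ (−x)^{1/2} for some C₀ > 0. If u : [−ε, 0) → ℂ is continuously differentiable and satisfies u'(x) + m B(x) u(x) = g(x) for all x ∈ [−ε, 0), then there exists C₁ > 0 such that |u(x)| ≤ C₁ (−x)^{min(3/2, ml)} for all x ∈ [−ε, 0). -/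
open Set Real

/-!
With `F x = ∫_{-ε}^x B`, the integrating factor `exp (m F)` turns the equation into
`(u · exp (m F))' = g · exp (m F)`. Since `B + l / x` is bounded, so is `F x + l log (-x)`, hence
`exp (m F x)` is comparable to `(-x) ^ (-m l)`. The right-hand side is then `O((-t) ^ (q - 1))` with
`q = 3/2 - m l ≠ 0`, and integrating gives `‖u x‖ ≲ (-x) ^ (m l) (1 + (ε ^ q - (-x) ^ q) / q)`,
which is `O((-x) ^ (m l))` when `q > 0` and `O((-x) ^ (3/2))` when `q < 0`.
-/

theorem ContinuousOn.hasDerivWithinAt_integral_Icc {E : Type*} [NormedAddCommGroup E]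
    [NormedSpace ℝ E] [CompleteSpace E] {f : ℝ → E} {a b x : ℝ}
    (hf : ContinuousOn f (Icc a b)) (hx : x ∈ Icc a b) :
    HasDerivWithinAt (fun t => ∫ s in a..t, f s) (f x) (Icc a b) x := by
  have : Fact (x ∈ Icc a b) := ⟨hx⟩
  exact intervalIntegral.integral_hasDerivWithinAt_right
    ((hf.mono (Icc_subset_Icc_right hx.2)).intervalIntegrable_of_Icc hx.1)
    (hf.stronglyMeasurableAtFilter_nhdsWithin measurableSet_Icc x) (hf x hx)

theorem HasDerivWithinAt.mul_exp_of_linear_ode {u : ℝ → ℂ} {P : ℝ → ℝ} {g : ℂ} {β : ℝ}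
    {s : Set ℝ} {x : ℝ} (hu : HasDerivWithinAt u (g - β * u x) s x)
    (hP : HasDerivWithinAt P β s x) :
    HasDerivWithinAt (fun t => u t * (Real.exp (P t) : ℂ)) (g * Real.exp (P x)) s x := by
  refine (hu.mul hP.exp.ofReal_comp).congr_deriv ?_
  push_cast
  ring

theorem exp_mem_Icc_of_abs_add_mul_log_sub_le {Φ y k c M : ℝ} (hy : 0 < y)
    (h : |Φ + k * log y - c| ≤ M) :
    exp Φ ∈ Icc (exp (c - M) * y ^ (-k)) (exp (c + M) * y ^ (-k)) := by
  have hΦ : exp Φ = exp (Φ + k * log y) * y ^ (-k) := by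
    rw [rpow_def_of_pos hy, ← exp_add]
    ring_nf
  obtain ⟨h₁, h₂⟩ := abs_le.1 h
  rw [hΦ]
  constructor <;> gcongr ?_ * _ <;> exact exp_le_exp.2 (by linarith)

theorem rpow_le_rpow_mul_rpow_of_le {y ε a b : ℝ} (hy : 0 < y) (hyε : y ≤ ε) (hba : b ≤ a) :
    y ^ a ≤ ε ^ (a - b) * y ^ b := by
  calc y ^ a = y ^ (a - b) * y ^ b := by rw [← rpow_add hy, sub_add_cancel]
    _ ≤ ε ^ (a - b) * y ^ b := by gcongr

theorem hasDerivAt_neg_rpow {q t : ℝ} (ht : t ≠ 0) :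
    HasDerivAt (fun s => (-s) ^ q) (-(q * (-t) ^ (q - 1))) t := by
  simpa [Function.comp_def] using
    (hasDerivAt_rpow_const (p := q) (Or.inl (neg_ne_zero.2 ht))).comp t (hasDerivAt_neg t)

theorem norm_le_add_of_norm_deriv_le_rpow {E : Type*} [NormedAddCommGroup E] [NormedSpace ℝ E]
    {v v' : ℝ → E} {a b q K : ℝ} (hab : a ≤ b) (hb : b < 0) (hq : q ≠ 0)
    (hv : ∀ t ∈ Icc a b, HasDerivWithinAt v (v' t) (Icc a b) t)
    (hv' : ∀ t ∈ Ico a b, ‖v' t‖ ≤ K * (-t) ^ (q - 1)) :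
    ‖v b‖ ≤ ‖v a‖ + K * (((-a) ^ q - (-b) ^ q) / q) := by
  have hW : ∀ t ∈ Icc a b, HasDerivAt (fun s => ‖v a‖ + K * (((-a) ^ q - (-s) ^ q) / q))
      (K * (-t) ^ (q - 1)) t := fun t ht => by
    refine ((((hasDerivAt_neg_rpow (ht.2.trans_lt hb).ne).const_sub _).div_const q
      |>.const_mul K).const_add ‖v a‖).congr_deriv ?_
    field_simp
  refine image_norm_le_of_norm_deriv_right_le_deriv_boundary'
    (fun t ht => (hv t ht).continuousWithinAt)
    (fun t ht => (hv t (Ico_subset_Icc_self ht)).mono_of_mem_nhdsWithin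
      (Icc_mem_nhdsGE_of_mem ht))
    (by simp) (fun t ht => (hW t ht).continuousAt.continuousWithinAt)
    (fun t ht => (hW t (Ico_subset_Icc_self ht)).hasDerivWithinAt) hv' (right_mem_Icc.2 hab)

theorem exists_rpow_sub_div_mul_rpow_le {p a ε : ℝ} (hpa : p ≠ a) (hε : 0 < ε) :
    ∃ D > 0, ∀ y ∈ Ioc 0 ε,
      (ε ^ (p - a) - y ^ (p - a)) / (p - a) * y ^ a ≤ D * y ^ min p a := by
  rcases hpa.lt_or_gt with hpa | hap
  · refine ⟨1 / (a - p), by simpa using hpa, fun y hy => ?_⟩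
    have hε' : 0 ≤ ε ^ (p - a) := by positivity
    calc (ε ^ (p - a) - y ^ (p - a)) / (p - a) * y ^ a
        = (y ^ (p - a) - ε ^ (p - a)) / (a - p) * y ^ a := by
          rw [← neg_sub a p, div_neg, ← neg_div, neg_sub]
      _ ≤ y ^ (p - a) / (a - p) * y ^ a := by
          gcongr
          · exact rpow_nonneg hy.1.le a
          · linarith
      _ = 1 / (a - p) * y ^ min p a := by
          rw [min_eq_left hpa.le, div_mul_eq_mul_div, ← rpow_add hy.1, sub_add_cancel]; ring
  · refine ⟨ε ^ (p - a) / (p - a), by have := sub_pos.2 hap; positivity, fun y hy => ?_⟩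
    have hy' : 0 ≤ y ^ (p - a) := rpow_nonneg hy.1.le _
    rw [min_eq_right hap.le]
    gcongr
    · exact rpow_nonneg hy.1.le a
    · linarith

theorem exists_add_mul_rpow_sub_div_mul_rpow_le {p a ε c K : ℝ} (hpa : p ≠ a) (hε : 0 < ε)
    (hc : 0 ≤ c) (hK : 0 < K) :
    ∃ C > 0, ∀ y ∈ Ioc 0 ε,
      (c + K * ((ε ^ (p - a) - y ^ (p - a)) / (p - a))) * y ^ a ≤ C * y ^ min p a := by
  obtain ⟨D, hD, hDbound⟩ := exists_rpow_sub_div_mul_rpow_le hpa hε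
  refine ⟨c * ε ^ (a - min p a) + K * D, by positivity, fun y hy => ?_⟩
  have hc' : c * y ^ a ≤ c * (ε ^ (a - min p a) * y ^ min p a) :=
    mul_le_mul_of_nonneg_left (rpow_le_rpow_mul_rpow_of_le hy.1 hy.2 (min_le_right p a)) hc
  have hK' := mul_le_mul_of_nonneg_left (hDbound y hy) hK.le
  linear_combination hc' + hK'

theorem abs_integral_add_mul_log_sub_le {B : ℝ → ℝ} {l CB ε t : ℝ}
    (hB : ContinuousOn B (Ico (-ε) 0)) (hCB : ∀ x ∈ Ico (-ε) (0 : ℝ), |B x + l / x| ≤ CB)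
    (ht : t ∈ Ico (-ε) 0) :
    |(∫ s in (-ε)..t, B s) + l * log (-t) - l * log ε| ≤ CB * ε := by
  have hsub : Icc (-ε) t ⊆ Ico (-ε) 0 := Icc_subset_Ico_right ht.2
  have hψ : ∀ s ∈ Icc (-ε) t, HasDerivWithinAt (fun s => (∫ r in (-ε)..s, B r) + l * log (-s))
      (B s + l / s) (Icc (-ε) t) s := fun s hs => by
    have hlog : HasDerivAt (fun s => log (-s)) (1 / s) s := by
      simpa [neg_div_neg_eq] using (hasDerivAt_neg s).log (neg_ne_zero.2 (hsub hs).2.ne)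
    exact (((hB.mono hsub).hasDerivWithinAt_integral_Icc hs).add
      (hlog.hasDerivWithinAt.const_mul l)).congr_deriv (by ring)
  have hmvt := norm_image_sub_le_of_norm_deriv_le_segment' hψ
    (fun s hs => hCB s (hsub (Ico_subset_Icc_self hs))) t (right_mem_Icc.2 ht.1)
  have hCB0 : 0 ≤ CB := (abs_nonneg _).trans (hCB t ht)
  simp only [intervalIntegral.integral_same, neg_neg, zero_add, Real.norm_eq_abs] at hmvt
  calc _ ≤ CB * (t - -ε) := hmvt
    _ ≤ CB * ε := by gcongr; linarith [ht.2]

theorem exp_mul_integral_mem_Icc {B : ℝ → ℝ} {m l CB ε t : ℝ} (hm : 0 ≤ m)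
    (hB : ContinuousOn B (Ico (-ε) 0)) (hCB : ∀ x ∈ Ico (-ε) (0 : ℝ), |B x + l / x| ≤ CB)
    (ht : t ∈ Ico (-ε) 0) :
    exp (m * ∫ s in (-ε)..t, B s) ∈ Icc (exp (m * l * log ε - m * (CB * ε)) * (-t) ^ (-(m * l)))
      (exp (m * l * log ε + m * (CB * ε)) * (-t) ^ (-(m * l))) := by
  refine exp_mem_Icc_of_abs_add_mul_log_sub_le (neg_pos.2 ht.2) ?_
  calc |m * (∫ s in (-ε)..t, B s) + m * l * log (-t) - m * l * log ε|
      = |m * ((∫ s in (-ε)..t, B s) + l * log (-t) - l * log ε)| := by ring_nf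
    _ = m * |(∫ s in (-ε)..t, B s) + l * log (-t) - l * log ε| := by
        rw [abs_mul, abs_of_nonneg hm]
    _ ≤ m * (CB * ε) := by gcongr; exact abs_integral_add_mul_log_sub_le hB hCB ht

theorem norm_mul_exp_le_of_hasDerivWithinAt {u g : ℝ → ℂ} {β P : ℝ → ℝ} {a b q K : ℝ}
    (hab : a ≤ b) (hb : b < 0) (hq : q ≠ 0)
    (hu : ∀ t ∈ Icc a b, HasDerivWithinAt u (g t - (β t : ℂ) * u t) (Icc a b) t)
    (hP : ∀ t ∈ Icc a b, HasDerivWithinAt P (β t) (Icc a b) t)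
    (hg : ∀ t ∈ Ico a b, ‖g t‖ * exp (P t) ≤ K * (-t) ^ (q - 1)) :
    ‖u b‖ * exp (P b) ≤ ‖u a‖ * exp (P a) + K * (((-a) ^ q - (-b) ^ q) / q) := by
  have hnorm : ∀ (w : ℂ) t, ‖w * (exp (P t) : ℂ)‖ = ‖w‖ * exp (P t) := fun w t => by
    rw [norm_mul, Complex.norm_real, Real.norm_of_nonneg (exp_pos _).le]
  simpa only [hnorm] using norm_le_add_of_norm_deriv_le_rpow hab hb hq
    (fun t ht => (hu t ht).mul_exp_of_linear_ode (hP t ht))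
    (fun t ht => (hnorm _ t).trans_le (hg t ht))

theorem stmt_5_general (m l : ℝ) (hm : 0 < m) (hml : 2*m*l ≠ 3)
    (ε : ℝ) (hε : 0 < ε)
    (B : ℝ → ℝ) (hBcont : ContinuousOn B (Set.Ico (-ε) 0))
    (CB : ℝ) (hCB : ∀ x ∈ Set.Ico (-ε) (0:ℝ), |B x + l/x| ≤ CB)
    (g : ℝ → ℂ)
    (C₀ : ℝ) (hC₀ : 0 < C₀)
    (hgb : ∀ x ∈ Set.Ico (-ε) (0:ℝ), ‖g x‖ ≤ C₀ * (-x) ^ ((1:ℝ)/2))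
    (u : ℝ → ℂ)
    (hu : ∀ x ∈ Set.Ico (-ε) (0:ℝ),
      HasDerivWithinAt u (g x - ((m * B x : ℝ) : ℂ) * u x) (Set.Ico (-ε) 0) x) :
    ∃ C₁ > 0, ∀ x ∈ Set.Ico (-ε) (0:ℝ),
      ‖u x‖ ≤ C₁ * (-x) ^ (min (3/2 : ℝ) (m*l)) := by
  set F : ℝ → ℝ := fun t => ∫ s in (-ε)..t, B s
  set K₁ := exp (m * l * log ε - m * (CB * ε))
  set K₂ := exp (m * l * log ε + m * (CB * ε))
  have hpa : (3 / 2 : ℝ) ≠ m * l := fun h => hml (by linarith)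
  have hF : ∀ t ∈ Ico (-ε) (0 : ℝ),
      exp (m * F t) ∈ Icc (K₁ * (-t) ^ (-(m * l))) (K₂ * (-t) ^ (-(m * l))) := fun t ht =>
    exp_mul_integral_mem_Icc hm.le hBcont hCB ht
  have hgF : ∀ t ∈ Ico (-ε) (0 : ℝ),
      ‖g t‖ * exp (m * F t) ≤ C₀ * K₂ * (-t) ^ ((3 / 2 - m * l) - 1) := fun t ht => calc
    ‖g t‖ * exp (m * F t) ≤ C₀ * (-t) ^ ((1 : ℝ) / 2) * (K₂ * (-t) ^ (-(m * l))) :=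
      mul_le_mul (hgb t ht) (hF t ht).2 (exp_pos _).le
        (by have := neg_pos.2 ht.2; positivity)
    _ = C₀ * K₂ * (-t) ^ ((3 / 2 - m * l) - 1) := by
      rw [mul_mul_mul_comm, ← rpow_add (neg_pos.2 ht.2)]; ring_nf
  have hv : ∀ x ∈ Ico (-ε) (0 : ℝ), ‖u x‖ * exp (m * F x) ≤
      ‖u (-ε)‖ + C₀ * K₂ * ((ε ^ (3 / 2 - m * l) - (-x) ^ (3 / 2 - m * l)) / (3 / 2 - m * l)) :=
      fun x hx => by
    have hsub : Icc (-ε) x ⊆ Ico (-ε) 0 := Icc_subset_Ico_right hx.2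
    simpa [F] using norm_mul_exp_le_of_hasDerivWithinAt (β := fun t => m * B t) hx.1 hx.2
      (sub_ne_zero.2 hpa) (fun t ht => (hu t (hsub ht)).mono hsub)
      (fun t ht => ((hBcont.mono hsub).hasDerivWithinAt_integral_Icc ht).const_mul m)
      (fun t ht => hgF t (hsub (Ico_subset_Icc_self ht)))
  obtain ⟨C, hC, hCbound⟩ := exists_add_mul_rpow_sub_div_mul_rpow_le hpa hε
    (norm_nonneg (u (-ε))) (by positivity : 0 < C₀ * K₂)
  refine ⟨C / K₁, by positivity, fun x hx => ?_⟩
  have hx' : -x ∈ Ioc 0 ε := ⟨neg_pos.2 hx.2, by linarith [hx.1]⟩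
  have hpow : 0 < (-x) ^ (m * l) := rpow_pos_of_pos hx'.1 _
  rw [div_mul_eq_mul_div, le_div_iff₀ (exp_pos _)]
  calc ‖u x‖ * K₁ = ‖u x‖ * (K₁ * (-x) ^ (-(m * l))) * (-x) ^ (m * l) := by
        rw [rpow_neg hx'.1.le]; field_simp [hpow.ne']
    _ ≤ ‖u x‖ * exp (m * F x) * (-x) ^ (m * l) := by gcongr; exact (hF x hx).1
    _ ≤ _ := by gcongr; exact hv x hx
    _ ≤ C * (-x) ^ min (3 / 2 : ℝ) (m * l) := hCbound (-x) hx'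

/-- Suppose `2ml ≠ 3`. If `B` is continuous on `[−ε,0)` with `|B(x) + l/x|`
bounded, `|g(x)| ≤ C₀(−x)^{1/2}`, and `u' + mBu = g` on `[−ε,0)`, then
`|u(x)| ≤ C₁ (−x)^{min(3/2, ml)}` on `[−ε,0)`. -/
theorem stmt_5 (m l : ℝ) (hm : 0 < m) (hl : 0 < l) (hml : 2*m*l ≠ 3)
    (ε : ℝ) (hε : 0 < ε)
    (B : ℝ → ℝ) (hBcont : ContinuousOn B (Set.Ico (-ε) 0))
    (CB : ℝ) (hCB : ∀ x ∈ Set.Ico (-ε) (0:ℝ), |B x + l/x| ≤ CB)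
    (g : ℝ → ℂ) (hgcont : ContinuousOn g (Set.Ico (-ε) 0))
    (C₀ : ℝ) (hC₀ : 0 < C₀)
    (hgb : ∀ x ∈ Set.Ico (-ε) (0:ℝ), ‖g x‖ ≤ C₀ * (-x) ^ ((1:ℝ)/2))
    (u : ℝ → ℂ)
    (hu : ∀ x ∈ Set.Ico (-ε) (0:ℝ),
      HasDerivWithinAt u (g x - ((m * B x : ℝ) : ℂ) * u x) (Set.Ico (-ε) 0) x) :
    ∃ C₁ > 0, ∀ x ∈ Set.Ico (-ε) (0:ℝ),
      ‖u x‖ ≤ C₁ * (-x) ^ (min (3/2 : ℝ) (m*l)) :=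
  stmt_5_general m l hm hml ε hε B hBcont CB hCB g C₀ hC₀ hgb u hu
end

section
/- Let m > 0, l > 0 with ml ≥ 1. There exists h₀ > 0 such that for all h ∈ (0, h₀) and all φ ∈ C_c^∞((−∞,0), ℂ⁴): Re ∫_{−∞}^0 ⟨ −h² φ''(x) + (1/l² + x²/l⁴) φ(x) − i h (x/l⁴)(1/l² + x²/l⁴)^{−1/2} γ¹γ² φ(x) + h² (m²l²/x²) φ(x) + i h² (ml/x²) γ¹ φ(x), φ(x) ⟩ dx ≥ (1/l² − h/2) ∫_{−∞}^0 ‖φ(x)‖² dx. -/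
open MeasureTheory Set Matrix

/-- The Dirac matrix `γ¹`. -/
noncomputable def γ1 : Matrix (Fin 4) (Fin 4) ℂ :=
  !![0, 0, Complex.I, 0;
     0, 0, 0, -Complex.I;
     Complex.I, 0, 0, 0;
     0, -Complex.I, 0, 0]

/-- The matrix `γ¹γ²`. -/
noncomputable def γ12 : Matrix (Fin 4) (Fin 4) ℂ :=
  !![0, -1, 0, 0;
     1, 0, 0, 0;
     0, 0, 0, -1;
     0, 0, 1, 0]

/-- The standard Hermitian inner product `⟨u,v⟩ = ∑ uⱼ v̄ⱼ` on `ℂ⁴`. -/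
noncomputable def hermInner (u v : Fin 4 → ℂ) : ℂ :=
  ∑ j, u j * (starRingEnd ℂ) (v j)

/-- The squared Hermitian norm `‖u‖² = ∑ |uⱼ|²` on `ℂ⁴`. -/
noncomputable def nsq (u : Fin 4 → ℂ) : ℝ :=
  ∑ j, Complex.normSq (u j)

lemma nsq_nonneg' (u : Fin 4 → ℂ) : 0 ≤ nsq u :=
  Finset.sum_nonneg fun _ _ => Complex.normSq_nonneg _

lemma hermInner_self (u : Fin 4 → ℂ) : hermInner u u = (nsq u : ℂ) := by
  simp [hermInner, nsq, Complex.mul_conj]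

lemma hermInner_add_left (u v w : Fin 4 → ℂ) :
    hermInner (u + v) w = hermInner u w + hermInner v w := by
  simp [hermInner, add_mul, Finset.sum_add_distrib]

lemma hermInner_sub_left (u v w : Fin 4 → ℂ) :
    hermInner (u - v) w = hermInner u w - hermInner v w := by
  simp [hermInner, sub_mul, Finset.sum_sub_distrib]

lemma hermInner_smul_left (c : ℂ) (u w : Fin 4 → ℂ) :
    hermInner (c • u) w = c * hermInner u w := by
  simp [hermInner, mul_assoc, Finset.mul_sum]

lemma hermInner_zero_right (u : Fin 4 → ℂ) : hermInner u 0 = 0 := by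
  simp [hermInner]

lemma g12_mulVec (u : Fin 4 → ℂ) : γ12 *ᵥ u = ![-u 1, u 0, -u 3, u 2] := by
  funext i
  fin_cases i <;> simp [γ12, Matrix.mulVec, dotProduct, Fin.sum_univ_four, Matrix.vecHead, Matrix.vecTail]

lemma g1_mulVec (u : Fin 4 → ℂ) :
    γ1 *ᵥ u = ![Complex.I * u 2, -(Complex.I * u 3), Complex.I * u 0, -(Complex.I * u 1)] := by
  funext i
  fin_cases i <;> simp [γ1, Matrix.mulVec, dotProduct, Fin.sum_univ_four, Matrix.vecHead, Matrix.vecTail]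

lemma abs_im_q12 (u : Fin 4 → ℂ) : |(hermInner (γ12 *ᵥ u) u).im| ≤ nsq u := by
  rw [abs_le, g12_mulVec]
  simp only [hermInner, nsq, Fin.sum_univ_four, Matrix.cons_val_zero, Matrix.cons_val_one,
    Matrix.head_cons, Matrix.cons_val_two, Matrix.cons_val_three, Matrix.tail_cons,
    Complex.add_im, Complex.mul_im, Complex.conj_re, Complex.conj_im, Complex.normSq_apply,
    Complex.neg_im, Complex.neg_re, neg_mul, mul_neg, neg_neg]
  constructor <;> nlinarith [sq_nonneg ((u 0).re - (u 1).im), sq_nonneg ((u 0).re + (u 1).im),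
    sq_nonneg ((u 0).im - (u 1).re), sq_nonneg ((u 0).im + (u 1).re),
    sq_nonneg ((u 2).re - (u 3).im), sq_nonneg ((u 2).re + (u 3).im),
    sq_nonneg ((u 2).im - (u 3).re), sq_nonneg ((u 2).im + (u 3).re)]

lemma abs_im_q1 (u : Fin 4 → ℂ) : |(hermInner (γ1 *ᵥ u) u).im| ≤ nsq u := by
  rw [abs_le, g1_mulVec]
  simp only [hermInner, nsq, Fin.sum_univ_four, Matrix.cons_val_zero, Matrix.cons_val_one,
    Matrix.head_cons, Matrix.cons_val_two, Matrix.cons_val_three, Matrix.tail_cons,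
    Complex.add_im, Complex.mul_im, Complex.mul_re, Complex.conj_re, Complex.conj_im,
    Complex.normSq_apply, Complex.neg_im, Complex.neg_re, Complex.I_re, Complex.I_im,
    neg_mul, mul_neg, neg_neg, one_mul, zero_mul, mul_zero, zero_sub, sub_zero, zero_add, add_zero]
  constructor <;> nlinarith [sq_nonneg ((u 0).re - (u 2).re), sq_nonneg ((u 0).re + (u 2).re),
    sq_nonneg ((u 0).im - (u 2).im), sq_nonneg ((u 0).im + (u 2).im),
    sq_nonneg ((u 1).re - (u 3).re), sq_nonneg ((u 1).re + (u 3).re),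
    sq_nonneg ((u 1).im - (u 3).im), sq_nonneg ((u 1).im + (u 3).im)]

/-- continuity of `x ↦ hermInner (f x) (g x)` -/
lemma continuous_hermInner {f g : ℝ → Fin 4 → ℂ} (hf : Continuous f) (hg : Continuous g) :
    Continuous fun x => hermInner (f x) (g x) := by
  unfold hermInner
  exact continuous_finset_sum _ fun j _ =>
    ((continuous_apply j).comp hf).mul (Complex.continuous_conj.comp ((continuous_apply j).comp hg))

lemma continuous_mulVec (A : Matrix (Fin 4) (Fin 4) ℂ) {f : ℝ → Fin 4 → ℂ} (hf : Continuous f) :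
    Continuous fun x => A *ᵥ f x := by
  refine continuous_pi fun i => ?_
  simp only [Matrix.mulVec, dotProduct]
  exact continuous_finset_sum _ fun j _ => continuous_const.mul ((continuous_apply j).comp hf)

lemma continuous_nsq {f : ℝ → Fin 4 → ℂ} (hf : Continuous f) :
    Continuous fun x => nsq (f x) := by
  unfold nsq
  exact continuous_finset_sum _ fun j _ =>
    Complex.continuous_normSq.comp ((continuous_apply j).comp hf)

lemma continuousAt_hermInner {f g : ℝ → Fin 4 → ℂ} {x : ℝ}
    (hf : ContinuousAt f x) (hg : ContinuousAt g x) :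
    ContinuousAt (fun y => hermInner (f y) (g y)) x := by
  unfold hermInner
  apply tendsto_finset_sum
  intro j _
  exact (((continuous_apply j).continuousAt.comp hf).mul
    (Complex.continuous_conj.continuousAt.comp ((continuous_apply j).continuousAt.comp hg)))

lemma pointwise_bound (m l h x G I12 I1 C1 : ℝ) (hm : 0 < m) (hl : 0 < l) (hml : 1 ≤ m*l)
    (hh0 : 0 < h) (hh1 : h < 2*l^2) (hx : x < 0)
    (hG : 0 ≤ G) (h12 : |I12| ≤ G) (h1 : |I1| ≤ G)
    (hc1 : |C1| ≤ h * (-x) / l^3) :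
    (1/l^2 - h/2) * G ≤ (1/l^2 + x^2/l^4 + h^2*m^2*l^2/x^2) * G + C1 * I12
      - h^2*m*l/x^2 * I1 := by
  have hx2 : (0:ℝ) < x^2 := by nlinarith
  have hax : (0:ℝ) ≤ h * (-x) / l^3 :=
    div_nonneg (mul_nonneg hh0.le (by linarith)) (by positivity)
  have e1 : -(h*(-x)/l^3 * G) ≤ C1 * I12 := by
    have habs2 : |C1 * I12| ≤ h*(-x)/l^3 * G := by
      rw [abs_mul]
      exact mul_le_mul hc1 h12 (abs_nonneg _) hax
    linarith [neg_abs_le (C1 * I12)]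
  have e2 : h^2*m*l/x^2 * I1 ≤ h^2*m*l/x^2 * G :=
    mul_le_mul_of_nonneg_left ((le_abs_self _).trans h1) (by positivity)
  have hmlterm : (0:ℝ) ≤ h^2*m^2*l^2/x^2 - h^2*m*l/x^2 := by
    rw [div_sub_div_same]
    apply div_nonneg _ hx2.le
    nlinarith [mul_nonneg (mul_nonneg (sq_nonneg h) (mul_pos hm hl).le)
      (by linarith : (0:ℝ) ≤ m*l - 1)]
  have key : (0:ℝ) ≤ x^2/l^4 + h*x/l^3 + h/2 := by
    have expand : (x/l^2 + h/(2*l))^2 = x^2/l^4 + h*x/l^3 + h^2/(4*l^2) := by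
      field_simp
      ring
    have h4 : h^2/(4*l^2) ≤ h/2 := by
      rw [div_le_div_iff₀ (by positivity) (by norm_num)]
      nlinarith
    nlinarith [sq_nonneg (x/l^2 + h/(2*l))]
  have hscal : 1/l^2 - h/2 ≤ 1/l^2 + x^2/l^4 + h^2*m^2*l^2/x^2
      - h*(-x)/l^3 - h^2*m*l/x^2 := by
    have hrw : h * (-x) / l^3 = -(h * x / l^3) := by ring
    rw [hrw]
    linarith [key, hmlterm]
  nlinarith [mul_le_mul_of_nonneg_right hscal hG]

set_option maxHeartbeats 2000000 in
/-- For `ml ≥ 1` there is `h₀ > 0` so that for `0 < h < h₀` and every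
`φ ∈ C_c^∞((−∞,0),ℂ⁴)`:
`Re ∫ ⟨P̃φ, φ⟩ ≥ (1/l² − h/2) ∫ ‖φ‖²`, with
`P̃φ = −h²φ'' + (1/l² + x²/l⁴)φ − ih(x/l⁴)(1/l² + x²/l⁴)^{−1/2} γ¹γ² φ
  + h²(m²l²/x²)φ + ih²(ml/x²)γ¹φ`. -/
theorem stmt_10 (m l : ℝ) (hm : 0 < m) (hl : 0 < l) (hml : 1 ≤ m*l) :
    ∃ h₀ > 0, ∀ h : ℝ, 0 < h → h < h₀ →
      ∀ φ : ℝ → Fin 4 → ℂ, ContDiff ℝ (⊤ : ℕ∞) φ → HasCompactSupport φ →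
        tsupport φ ⊆ Set.Iio 0 →
        (1/l^2 - h/2) * (∫ x in Set.Iio (0:ℝ), nsq (φ x))
          ≤ (∫ x in Set.Iio (0:ℝ),
              hermInner
                ((-(h^2 : ℂ)) • deriv (deriv φ) x
                  + ((1/l^2 + x^2/l^4 : ℝ) : ℂ) • φ x
                  - (Complex.I *
                      ((h * (x/l^4) * (Real.sqrt (1/l^2 + x^2/l^4))⁻¹ : ℝ) : ℂ))
                      • (γ12 *ᵥ φ x)
                  + ((h^2 * m^2 * l^2 / x^2 : ℝ) : ℂ) • φ x
                  + (Complex.I * ((h^2 * m * l / x^2 : ℝ) : ℂ)) • (γ1 *ᵥ φ x))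
                (φ x)).re := by
  refine ⟨2*l^2, by positivity, fun h hh0 hh1 φ hφ hφc hφs => ?_⟩
  -- smoothness data
  have hphiT : ContDiff ℝ (⊤ : ℕ∞) φ := hφ.of_le (by simp)
  have hphid : Differentiable ℝ φ := hphiT.differentiable (by simp)
  have hd1 : ContDiff ℝ (⊤ : ℕ∞) (deriv φ) := (contDiff_infty_iff_deriv.mp hphiT).2
  have hd1d : Differentiable ℝ (deriv φ) := hd1.differentiable (by simp)
  have hd2c : Continuous (deriv (deriv φ)) := (contDiff_infty_iff_deriv.mp hd1).2.continuous
  -- named pieces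
  set f1 : ℝ → ℝ := fun x => (hermInner (deriv (deriv φ) x) (φ x)).re with hf1def
  set g : ℝ → ℝ := fun x => nsq (φ x) with hgdef
  set i12 : ℝ → ℝ := fun x => (hermInner (γ12 *ᵥ φ x) (φ x)).im with hi12def
  set i1 : ℝ → ℝ := fun x => (hermInner (γ1 *ᵥ φ x) (φ x)).im with hi1def
  set c1 : ℝ → ℝ := fun x => h * (x/l^4) * (Real.sqrt (1/l^2 + x^2/l^4))⁻¹ with hc1def
  set rest : ℝ → ℝ := fun x =>
    (1/l^2 + x^2/l^4 + h^2 * m^2 * l^2 / x^2) * g x + c1 x * i12 x - (h^2 * m * l / x^2) * i1 x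
    with hrestdef
  -- pointwise decomposition of the integrand
  have hdecomp : ∀ x : ℝ,
      (hermInner
        ((-(h^2 : ℂ)) • deriv (deriv φ) x
          + ((1/l^2 + x^2/l^4 : ℝ) : ℂ) • φ x
          - (Complex.I * ((h * (x/l^4) * (Real.sqrt (1/l^2 + x^2/l^4))⁻¹ : ℝ) : ℂ))
              • (γ12 *ᵥ φ x)
          + ((h^2 * m^2 * l^2 / x^2 : ℝ) : ℂ) • φ x
          + (Complex.I * ((h^2 * m * l / x^2 : ℝ) : ℂ)) • (γ1 *ᵥ φ x))
        (φ x)).re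
      = -(h^2 * f1 x) + rest x := by
    intro x
    simp only [hermInner_add_left, hermInner_sub_left, hermInner_smul_left, hermInner_self,
      hrestdef, hf1def, hgdef, hi12def, hi1def, hc1def]
    simp only [Complex.add_re, Complex.sub_re, Complex.mul_re, Complex.mul_im, Complex.neg_re,
      Complex.neg_im, Complex.ofReal_re, Complex.ofReal_im, Complex.I_re, Complex.I_im,
      ← Complex.ofReal_pow]
    ring
  -- basic support facts
  have hvan : ∀ x : ℝ, x ∉ tsupport φ → φ x = 0 := fun x hx =>
    image_eq_zero_of_notMem_tsupport hx
  have hsupp_f1 : Function.support f1 ⊆ tsupport φ := by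
    intro x hx
    by_contra hc
    exact hx (by simp [hf1def, hvan x hc, hermInner_zero_right])
  have hsupp_g : Function.support g ⊆ tsupport φ := by
    intro x hx
    by_contra hc
    exact hx (by simp [hgdef, hvan x hc, nsq])
  have hsupp_i12 : Function.support i12 ⊆ tsupport φ := by
    intro x hx
    by_contra hc
    exact hx (by simp [hi12def, hvan x hc, hermInner_zero_right])
  have hsupp_i1 : Function.support i1 ⊆ tsupport φ := by
    intro x hx
    by_contra hc
    exact hx (by simp [hi1def, hvan x hc, hermInner_zero_right])
  have h0K : (0:ℝ) ∉ tsupport φ := fun hx => lt_irrefl 0 (Set.mem_Iio.mp (hφs hx))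
  have hev0 : ∀ {k : ℝ → ℝ}, Function.support k ⊆ tsupport φ →
      ∀ᶠ x in nhds (0:ℝ), k x = 0 := by
    intro k hk
    filter_upwards [(isClosed_tsupport φ).isOpen_compl.mem_nhds h0K] with y hy
    by_contra hc
    exact hy (hk hc)
  -- continuity
  have hφcont : Continuous φ := hphid.continuous
  have hf1c : Continuous f1 := Complex.continuous_re.comp (continuous_hermInner hd2c hφcont)
  have hgc : Continuous g := continuous_nsq hφcont
  have hi12c : Continuous i12 :=
    Complex.continuous_im.comp (continuous_hermInner (continuous_mulVec γ12 hφcont) hφcont)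
  have hi1c : Continuous i1 :=
    Complex.continuous_im.comp (continuous_hermInner (continuous_mulVec γ1 hφcont) hφcont)
  have hspos : ∀ x : ℝ, 0 < Real.sqrt (1/l^2 + x^2/l^4) := by
    intro x
    apply Real.sqrt_pos.mpr
    positivity
  have hscont : Continuous fun x : ℝ => Real.sqrt (1/l^2 + x^2/l^4) := by
    apply Real.continuous_sqrt.comp
    fun_prop
  have hc1c : Continuous c1 := by
    rw [hc1def]
    exact (continuous_const.mul (continuous_id.div_const _)).mul
      (hscont.inv₀ fun x => (hspos x).ne')
  -- continuity of products with 1/x^2 coefficients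
  have cont_mul_aux : ∀ (c k : ℝ → ℝ), Continuous k → (∀ x : ℝ, x ≠ 0 → ContinuousAt c x) →
      Function.support k ⊆ tsupport φ → Continuous fun x => c x * k x := by
    intro c k hk hc hsupp
    rw [continuous_iff_continuousAt]
    intro x
    rcases eq_or_ne x 0 with rfl | hx
    · have hevk : ∀ᶠ y in nhds (0:ℝ), k y = 0 := hev0 hsupp
      have : (fun y => c y * k y) =ᶠ[nhds (0:ℝ)] fun _ => 0 := by
        filter_upwards [hevk] with y hy
        simp [hy]
      exact ContinuousAt.congr continuousAt_const this.symm
    · exact (hc x hx).mul hk.continuousAt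
  have hrestc : Continuous rest := by
    rw [hrestdef]
    refine Continuous.sub (Continuous.add ?_ (hc1c.mul hi12c)) ?_
    · refine cont_mul_aux _ _ hgc (fun x hx => ?_) hsupp_g
      have h1 : ContinuousAt (fun x : ℝ => 1/l^2 + x^2/l^4) x := by fun_prop
      have h2 : ContinuousAt (fun x : ℝ => h^2 * m^2 * l^2 / x^2) x :=
        ContinuousAt.div continuousAt_const (by fun_prop) (pow_ne_zero 2 hx)
      exact h1.add h2
    · refine cont_mul_aux _ _ hi1c (fun x hx => ?_) hsupp_i1
      exact ContinuousAt.div continuousAt_const (by fun_prop) (pow_ne_zero 2 hx)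
  -- compact supports and integrability
  have hcs_f1 : HasCompactSupport f1 := hφc.mono' hsupp_f1
  have hcs_g : HasCompactSupport g := hφc.mono' hsupp_g
  have hsupp_rest : Function.support rest ⊆ tsupport φ := by
    intro x hx
    by_contra hc
    apply hx
    have e1 : g x = 0 := by
      by_contra hgx; exact hc (hsupp_g hgx)
    have e2 : i12 x = 0 := by
      by_contra hgx; exact hc (hsupp_i12 hgx)
    have e3 : i1 x = 0 := by
      by_contra hgx; exact hc (hsupp_i1 hgx)
    simp [hrestdef, e1, e2, e3]
  have hcs_rest : HasCompactSupport rest := hφc.mono' hsupp_rest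
  have I_f1 : IntegrableOn f1 (Iio 0) := (hf1c.integrable_of_hasCompactSupport hcs_f1).integrableOn
  have I_g : IntegrableOn g (Iio 0) := (hgc.integrable_of_hasCompactSupport hcs_g).integrableOn
  have I_rest : IntegrableOn rest (Iio 0) :=
    (hrestc.integrable_of_hasCompactSupport hcs_rest).integrableOn
  -- the complex-valued integrand
  set Fc : ℝ → ℂ := fun x =>
    hermInner
      ((-(h^2 : ℂ)) • deriv (deriv φ) x
        + ((1/l^2 + x^2/l^4 : ℝ) : ℂ) • φ x
        - (Complex.I * ((h * (x/l^4) * (Real.sqrt (1/l^2 + x^2/l^4))⁻¹ : ℝ) : ℂ))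
            • (γ12 *ᵥ φ x)
        + ((h^2 * m^2 * l^2 / x^2 : ℝ) : ℂ) • φ x
        + (Complex.I * ((h^2 * m * l / x^2 : ℝ) : ℂ)) • (γ1 *ᵥ φ x))
      (φ x) with hFcdef
  have hFc_supp : Function.support Fc ⊆ tsupport φ := by
    intro x hx
    by_contra hc
    exact hx (by simp [hFcdef, hvan x hc, hermInner_zero_right])
  have hFc_cont : Continuous Fc := by
    rw [continuous_iff_continuousAt]
    intro x
    rcases eq_or_ne x 0 with rfl | hx
    · have hevF : ∀ᶠ y in nhds (0:ℝ), Fc y = 0 := by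
        filter_upwards [(isClosed_tsupport φ).isOpen_compl.mem_nhds h0K] with y hy
        simp [hFcdef, hvan y hy, hermInner_zero_right]
      have : Fc =ᶠ[nhds (0:ℝ)] fun _ => 0 := hevF
      exact ContinuousAt.congr continuousAt_const this.symm
    · have hw : ContinuousAt (fun y : ℝ =>
          (-(h^2 : ℂ)) • deriv (deriv φ) y
            + ((1/l^2 + y^2/l^4 : ℝ) : ℂ) • φ y
            - (Complex.I * ((h * (y/l^4) * (Real.sqrt (1/l^2 + y^2/l^4))⁻¹ : ℝ) : ℂ))
                • (γ12 *ᵥ φ y)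
            + ((h^2 * m^2 * l^2 / y^2 : ℝ) : ℂ) • φ y
            + (Complex.I * ((h^2 * m * l / y^2 : ℝ) : ℂ)) • (γ1 *ᵥ φ y)) x := by
        have t0 : ContinuousAt (fun y : ℝ => (-(h^2 : ℂ)) • deriv (deriv φ) y) x :=
          by fun_prop
        have tV : ContinuousAt (fun y : ℝ => ((1/l^2 + y^2/l^4 : ℝ) : ℂ) • φ y) x :=
          (Complex.continuous_ofReal.continuousAt.comp
            (by fun_prop : ContinuousAt (fun y : ℝ => 1/l^2 + y^2/l^4) x)).smul
            hφcont.continuousAt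
        have tc1 : ContinuousAt (fun y : ℝ =>
            (Complex.I * ((h * (y/l^4) * (Real.sqrt (1/l^2 + y^2/l^4))⁻¹ : ℝ) : ℂ))
              • (γ12 *ᵥ φ y)) x :=
          (continuousAt_const.mul
            (Complex.continuous_ofReal.continuousAt.comp hc1c.continuousAt)).smul
            (continuous_mulVec γ12 hφcont).continuousAt
        have hpow : ContinuousAt (fun y : ℝ => y^2) x := (continuous_pow 2).continuousAt
        have tB : ContinuousAt (fun y : ℝ => ((h^2 * m^2 * l^2 / y^2 : ℝ) : ℂ) • φ y) x :=
          (Complex.continuous_ofReal.continuousAt.comp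
            (ContinuousAt.div continuousAt_const hpow (pow_ne_zero 2 hx))).smul
            hφcont.continuousAt
        have tc2 : ContinuousAt (fun y : ℝ =>
            (Complex.I * ((h^2 * m * l / y^2 : ℝ) : ℂ)) • (γ1 *ᵥ φ y)) x :=
          (continuousAt_const.mul (Complex.continuous_ofReal.continuousAt.comp
            (ContinuousAt.div continuousAt_const hpow (pow_ne_zero 2 hx)))).smul
            (continuous_mulVec γ1 hφcont).continuousAt
        exact (((t0.add tV).sub tc1).add tB).add tc2
      exact continuousAt_hermInner hw hφcont.continuousAt
  have hFc_cs : HasCompactSupport Fc := hφc.mono' hFc_supp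
  have I_Fc : IntegrableOn Fc (Iio 0) :=
    (hFc_cont.integrable_of_hasCompactSupport hFc_cs).integrableOn
  -- rewrite the integral
  have hIeq : (∫ x in Set.Iio (0:ℝ),
      hermInner
        ((-(h^2 : ℂ)) • deriv (deriv φ) x
          + ((1/l^2 + x^2/l^4 : ℝ) : ℂ) • φ x
          - (Complex.I * ((h * (x/l^4) * (Real.sqrt (1/l^2 + x^2/l^4))⁻¹ : ℝ) : ℂ))
              • (γ12 *ᵥ φ x)
          + ((h^2 * m^2 * l^2 / x^2 : ℝ) : ℂ) • φ x
          + (Complex.I * ((h^2 * m * l / x^2 : ℝ) : ℂ)) • (γ1 *ᵥ φ x))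
        (φ x)).re
      = (∫ x in Set.Iio (0:ℝ), (-(h^2 * f1 x))) + ∫ x in Set.Iio (0:ℝ), rest x := by
    have hIneg : IntegrableOn (fun x => -(h^2 * f1 x)) (Iio 0) := by
      exact (I_f1.const_mul (h^2)).neg
    rw [← integral_add hIneg I_rest]
    have hre : (∫ x in Set.Iio (0:ℝ), Fc x).re = ∫ x in Set.Iio (0:ℝ), (Fc x).re := by
      have := integral_re (μ := volume.restrict (Iio 0)) (f := Fc) I_Fc
      simpa using this.symm
    rw [show (∫ x in Set.Iio (0:ℝ),
      hermInner
        ((-(h^2 : ℂ)) • deriv (deriv φ) x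
          + ((1/l^2 + x^2/l^4 : ℝ) : ℂ) • φ x
          - (Complex.I * ((h * (x/l^4) * (Real.sqrt (1/l^2 + x^2/l^4))⁻¹ : ℝ) : ℂ))
              • (γ12 *ᵥ φ x)
          + ((h^2 * m^2 * l^2 / x^2 : ℝ) : ℂ) • φ x
          + (Complex.I * ((h^2 * m * l / x^2 : ℝ) : ℂ)) • (γ1 *ᵥ φ x))
        (φ x)) = ∫ x in Set.Iio (0:ℝ), Fc x from rfl]
    rw [hre]
    apply setIntegral_congr_fun measurableSet_Iio
    intro x _
    exact hdecomp x
  rw [hIeq]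
  -- the second-derivative term is nonnegative: integration by parts
  have hf1int : (∫ x in Set.Iio (0:ℝ), f1 x) ≤ 0 := by
    obtain ⟨r, hr⟩ := hφc.isBounded.subset_closedBall 0
    have hKsub : tsupport φ ⊆ Set.Icc (-(|r|)) (|r|) := by
      intro x hx
      have := hr hx
      rw [Real.closedBall_eq_Icc] at this
      constructor
      · linarith [this.1, neg_abs_le r, le_abs_self r]
      · linarith [this.2, le_abs_self r]
    set a : ℝ := -(|r|) - 1 with hadef
    set b : ℝ := |r| + 1 with hbdef
    have hab : a ≤ b := by
      simp only [hadef, hbdef]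
      linarith [abs_nonneg r]
    have hKab : tsupport φ ⊆ Set.Ioc a b := by
      intro x hx
      obtain ⟨h1, h2⟩ := hKsub hx
      exact ⟨by simp only [hadef]; linarith, by simp only [hbdef]; linarith⟩
    have haK : a ∉ tsupport φ := by
      intro hx
      have := (hKsub hx).1
      simp only [hadef] at this
      linarith
    have hbK : b ∉ tsupport φ := by
      intro hx
      have := (hKsub hx).2
      simp only [hbdef] at this
      linarith
    set p : ℝ → ℝ := fun x => (hermInner (deriv φ x) (φ x)).re with hpdef
    have hp : ∀ x : ℝ, HasDerivAt p (f1 x + nsq (deriv φ x)) x := by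
      intro x
      have hterm : ∀ j ∈ Finset.univ, HasDerivAt
          (fun y => deriv φ y j * (starRingEnd ℂ) (φ y j))
          (deriv (deriv φ) x j * (starRingEnd ℂ) (φ x j)
            + deriv φ x j * (starRingEnd ℂ) (deriv φ x j)) x := by
        intro j _
        have hAj : HasDerivAt (fun y => deriv φ y j) (deriv (deriv φ) x j) x :=
          (ContinuousLinearMap.proj (R := ℝ) (φ := fun _ : Fin 4 => ℂ) j).hasFDerivAt.comp_hasDerivAt
            x (hd1d x).hasDerivAt
        have hBj : HasDerivAt (fun y => φ y j) (deriv φ x j) x :=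
          (ContinuousLinearMap.proj (R := ℝ) (φ := fun _ : Fin 4 => ℂ) j).hasFDerivAt.comp_hasDerivAt
            x (hphid x).hasDerivAt
        have hCj : HasDerivAt (fun y => (starRingEnd ℂ) (φ y j))
            ((starRingEnd ℂ) (deriv φ x j)) x := by
          have := ((Complex.conjCLE : ℂ ≃L[ℝ] ℂ) :
            ℂ →L[ℝ] ℂ).hasFDerivAt.comp_hasDerivAt x hBj
          exact this
        exact hAj.mul hCj
      have hq : HasDerivAt (fun y => hermInner (deriv φ y) (φ y))
          (hermInner (deriv (deriv φ) x) (φ x) + hermInner (deriv φ x) (deriv φ x)) x := by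
        have := HasDerivAt.fun_sum hterm
        simpa [hermInner, Finset.sum_add_distrib] using this
      have := Complex.reCLM.hasFDerivAt.comp_hasDerivAt x hq
      simp only [Complex.reCLM_apply, Complex.add_re] at this
      rw [hermInner_self, Complex.ofReal_re] at this
      exact this
    have hIab : (∫ x in a..b, (f1 x + nsq (deriv φ x))) = p b - p a :=
      intervalIntegral.integral_eq_sub_of_hasDerivAt (fun x _ => hp x)
        ((hf1c.add (continuous_nsq hd1.continuous)).intervalIntegrable a b)
    have hpa : p a = 0 := by simp [hpdef, hvan a haK, hermInner_zero_right]
    have hpb : p b = 0 := by simp [hpdef, hvan b hbK, hermInner_zero_right]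
    have hsplit : (∫ x in a..b, (f1 x + nsq (deriv φ x)))
        = (∫ x in a..b, f1 x) + ∫ x in a..b, nsq (deriv φ x) :=
      intervalIntegral.integral_add (hf1c.intervalIntegrable a b)
        ((continuous_nsq hd1.continuous).intervalIntegrable a b)
    have hnn : 0 ≤ ∫ x in a..b, nsq (deriv φ x) :=
      intervalIntegral.integral_nonneg hab fun x _ => nsq_nonneg' _
    have hf1ab : (∫ x in a..b, f1 x) ≤ 0 := by
      rw [hIab, hpa, hpb] at hsplit
      linarith
    have e1 : (∫ x in Set.Iio (0:ℝ), f1 x) = ∫ x : ℝ, f1 x :=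
      setIntegral_eq_integral_of_forall_compl_eq_zero fun x hx => by
        have : x ∉ tsupport φ := fun hc => hx (hφs hc)
        simp [hf1def, hvan x this, hermInner_zero_right]
    have e2 : (∫ x in a..b, f1 x) = ∫ x : ℝ, f1 x :=
      intervalIntegral.integral_eq_integral_of_support_subset (hsupp_f1.trans hKab)
    rw [e1, ← e2]
    exact hf1ab
  have hterm1 : 0 ≤ ∫ x in Set.Iio (0:ℝ), (-(h^2 * f1 x)) := by
    rw [integral_neg, integral_const_mul]
    have := mul_nonneg (sq_nonneg h) (neg_nonneg.mpr hf1int)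
    linarith
  -- the pointwise lower bound for the remaining terms
  have hpoint : ∀ x ∈ Set.Iio (0:ℝ), (1/l^2 - h/2) * g x ≤ rest x := by
    intro x hx
    simp only [Set.mem_Iio] at hx
    have hgx : 0 ≤ g x := nsq_nonneg' _
    have h12 : |i12 x| ≤ g x := abs_im_q12 _
    have h1 : |i1 x| ≤ g x := abs_im_q1 _
    have hs1 : 1/l ≤ Real.sqrt (1/l^2 + x^2/l^4) := by
      rw [show (1:ℝ)/l^2 + x^2/l^4 = (1/l)^2 + x^2/l^4 by ring]
      calc (1:ℝ)/l = Real.sqrt ((1/l)^2) := (Real.sqrt_sq (by positivity)).symm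
        _ ≤ _ := Real.sqrt_le_sqrt (by
          have : (0:ℝ) ≤ x^2/l^4 := by positivity
          linarith)
    have hsinv : (Real.sqrt (1/l^2 + x^2/l^4))⁻¹ ≤ l := by
      have h2 : (Real.sqrt (1/l^2 + x^2/l^4))⁻¹ ≤ (1/l)⁻¹ :=
        inv_anti₀ (by positivity) hs1
      simpa using h2
    have hc1abs : |c1 x| ≤ h * (-x) / l^3 := by
      have hxl : x / l^4 < 0 := div_neg_of_neg_of_pos hx (by positivity)
      have habs : |c1 x| = h * ((-x)/l^4) * (Real.sqrt (1/l^2 + x^2/l^4))⁻¹ := by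
        rw [hc1def]
        rw [abs_mul, abs_mul, abs_of_pos hh0, abs_of_pos (inv_pos.mpr (hspos x)),
          abs_of_neg hxl]
        ring
      rw [habs]
      have hfac : (0:ℝ) ≤ h * ((-x)/l^4) :=
        mul_nonneg hh0.le (div_nonneg (by linarith) (by positivity))
      calc h * ((-x)/l^4) * (Real.sqrt (1/l^2 + x^2/l^4))⁻¹
          ≤ h * ((-x)/l^4) * l := mul_le_mul_of_nonneg_left hsinv hfac
        _ = h * (-x) / l^3 := by field_simp
    simp only [hrestdef]
    exact pointwise_bound m l h x (g x) (i12 x) (i1 x) (c1 x) hm hl hml hh0 hh1 hx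
      hgx h12 h1 hc1abs
  have hterm2 : (1/l^2 - h/2) * (∫ x in Set.Iio (0:ℝ), g x) ≤ ∫ x in Set.Iio (0:ℝ), rest x := by
    rw [← integral_const_mul]
    exact setIntegral_mono_on (I_g.const_mul _) I_rest measurableSet_Iio hpoint
  have : (1/l^2 - h/2) * (∫ x in Set.Iio (0:ℝ), nsq (φ x))
      = (1/l^2 - h/2) * (∫ x in Set.Iio (0:ℝ), g x) := by rw [hgdef]
  rw [this]
  linarith
end

section
/- Let m > 0, l > 0, h > 0, set c_h = (1/l⁴ + h/(2l⁶))^{1/2}, and define ψ₁(x) = (−x)^{ml} e^{−c_h x²/(2h)} for x < 0. Then for every x < 0: −h² ψ₁''(x) + ( 1/l² + c_h² x² + h² ml(ml−1)/x² ) ψ₁(x) = E₁(h) ψ₁(x), where E₁(h) = 1/l² + (2ml+1) c_h h. -/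
/-!
The logarithmic derivative of `ψ(x) = (-x)^a e^{-k x²/2}` on `x < 0` is `a/x - k x`, so
`ψ'' = ((a/x - k x)² - a/x² - k) ψ = (k² x² + a(a-1)/x² - (2a+1) k) ψ`: `ψ` is an eigenfunction
of `-d²/dx² + k² x² + a(a-1)/x²` with eigenvalue `(2a+1) k`. The theorem is the case `a = ml`,
`k = c/h`, scaled by `h²` and shifted by `1/l²`.
-/

open Real

noncomputable def powGaussian (a k : ℝ) (x : ℝ) : ℝ := (-x) ^ a * exp (-(k * x ^ 2 / 2))

theorem hasDerivAt_powGaussian (a k : ℝ) {x : ℝ} (hx : x < 0) :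
    HasDerivAt (powGaussian a k) ((a / x - k * x) * powGaussian a k x) x := by
  have hnx : 0 < -x := neg_pos.mpr hx
  have hpow : HasDerivAt (fun t : ℝ => (-t) ^ a) (-(a * (-x) ^ (a - 1))) x := by
    simpa using (hasDerivAt_neg x).rpow_const (p := a) (Or.inl hnx.ne')
  have hexp : HasDerivAt (fun t : ℝ => exp (-(k * t ^ 2 / 2)))
      (exp (-(k * x ^ 2 / 2)) * -(k * x)) x := by
    have hquad : HasDerivAt (fun t : ℝ => -(k * t ^ 2 / 2)) (-(k * x)) x :=
      (((hasDerivAt_pow 2 x).const_mul k).div_const 2).neg.congr_deriv (by ring)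
    exact hquad.exp
  refine (hpow.fun_mul hexp).congr_deriv ?_
  rw [powGaussian, Real.rpow_sub_one hnx.ne']
  field_simp
  ring

theorem deriv_deriv_powGaussian (a k : ℝ) {x : ℝ} (hx : x < 0) :
    deriv (deriv (powGaussian a k)) x
      = ((a / x - k * x) ^ 2 - a / x ^ 2 - k) * powGaussian a k x := by
  have hderiv : deriv (powGaussian a k) =ᶠ[nhds x]
      fun y => (a / y - k * y) * powGaussian a k y := by
    filter_upwards [Iio_mem_nhds hx] with y hy
    exact (hasDerivAt_powGaussian a k hy).deriv
  have hlogDeriv : HasDerivAt (fun y : ℝ => a / y - k * y) (-(a / x ^ 2) - k) x := by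
    have h := ((hasDerivAt_inv hx.ne).const_mul a).fun_sub ((hasDerivAt_id' x).const_mul k)
    simpa only [← div_eq_mul_inv, mul_one, mul_neg] using h
  rw [hderiv.deriv_eq, (hlogDeriv.fun_mul (hasDerivAt_powGaussian a k hx)).deriv]
  ring

theorem neg_deriv_deriv_powGaussian_add (a k : ℝ) {x : ℝ} (hx : x < 0) :
    -deriv (deriv (powGaussian a k)) x
        + (k ^ 2 * x ^ 2 + a * (a - 1) / x ^ 2) * powGaussian a k x
      = (2 * a + 1) * k * powGaussian a k x := by
  rw [deriv_deriv_powGaussian a k hx]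
  field_simp [hx.ne]
  ring

theorem stmt_11_general (m l h : ℝ) (hh : 0 < h)
    (c E₁ : ℝ)
    (hE₁ : E₁ = 1/l^2 + (2*m*l + 1)*c*h)
    (ψ₁ : ℝ → ℝ)
    (hψ₁ : ψ₁ = fun x => (-x) ^ (m*l) * Real.exp (-c * x^2 / (2*h))) :
    ∀ x : ℝ, x < 0 →
      -h^2 * deriv (deriv ψ₁) x
          + (1/l^2 + c^2 * x^2 + h^2 * m * l * (m*l - 1) / x^2) * ψ₁ x
        = E₁ * ψ₁ x := by
  intro x hx
  have hψ : ψ₁ = powGaussian (m * l) (c / h) := by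
    rw [hψ₁]
    funext t
    rw [powGaussian]
    congr 2
    ring
  have hk : h ^ 2 * (c / h) = c * h := by field_simp [hh.ne']
  have hk_sq : h ^ 2 * (c / h) ^ 2 = c ^ 2 := by field_simp [hh.ne']
  rw [hψ, hE₁]
  linear_combination h ^ 2 * neg_deriv_deriv_powGaussian_add (m * l) (c / h) hx
    - x ^ 2 * powGaussian (m * l) (c / h) x * hk_sq
    + (2 * m * l + 1) * powGaussian (m * l) (c / h) x * hk

/-- With `c_h = (1/l⁴ + h/(2l⁶))^{1/2}` and
`ψ₁(x) = (−x)^{ml} e^{−c_h x²/(2h)}` for `x < 0`, one has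
`−h²ψ₁'' + (1/l² + c_h²x² + h²ml(ml−1)/x²)ψ₁ = E₁(h)ψ₁` with
`E₁(h) = 1/l² + (2ml+1)c_h h`. -/
theorem stmt_11 (m l h : ℝ) (hm : 0 < m) (hl : 0 < l) (hh : 0 < h)
    (c E₁ : ℝ) (hc : c = Real.sqrt (1/l^4 + h/(2*l^6)))
    (hE₁ : E₁ = 1/l^2 + (2*m*l + 1)*c*h)
    (ψ₁ : ℝ → ℝ)
    (hψ₁ : ψ₁ = fun x => (-x) ^ (m*l) * Real.exp (-c * x^2 / (2*h))) :
    ∀ x : ℝ, x < 0 →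
      -h^2 * deriv (deriv ψ₁) x
          + (1/l^2 + c^2 * x^2 + h^2 * m * l * (m*l - 1) / x^2) * ψ₁ x
        = E₁ * ψ₁ x :=
  stmt_11_general m l h hh c E₁ hE₁ ψ₁ hψ₁
end

section
/- Let m > 0, l > 0, h > 0, set α₁ = (1 + √(1 + 4ml(ml+1)))/2 and c_h = (1/l⁴ + h/(2l⁶))^{1/2}, and define ψ₂(x) = (−x)^{α₁} e^{−c_h x²/(2h)} for x < 0. Then α₁(α₁ − 1) = ml(ml+1), α₁ > ml, and for every x < 0: −h² ψ₂''(x) + ( 1/l² + c_h² x² + h² ml(ml+1)/x² ) ψ₂(x) = E₂(h) ψ₂(x), where E₂(h) = 1/l² + (2α₁+1) c_h h; moreover E₂(h) > E₁(h) := 1/l² + (2ml+1) c_h h. -/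
/-!
`α₁` is the larger root of `t² - t = ml(ml+1)`, namely `max (ml + 1) (-ml)`, so `α₁ > ml`. On `x < 0`,
`ψ₂ = exp φ` with `φ x = α₁ log(-x) - c x²/(2h)`, hence `ψ₂'' = (φ'² + φ'') ψ₂` with
`φ'² + φ'' = α₁(α₁-1)/x² - (2α₁+1)c/h + c²x²/h²`: after multiplying by `-h²`, the first and last
terms cancel the centrifugal and harmonic parts of the potential, leaving `(2α₁+1)ch`.
-/

open Real Filter Topology Set

theorem larger_root_mul_sub_one_and_lt {s α : ℝ} (hα : α = (1 + √(1 + 4 * s * (s + 1))) / 2) :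
    α * (α - 1) = s * (s + 1) ∧ s < α := by
  rw [show 1 + 4 * s * (s + 1) = (2 * s + 1) ^ 2 by ring, sqrt_sq_eq_abs] at hα
  subst hα
  rcases le_or_gt 0 (2 * s + 1) with hs | hs
  · rw [abs_of_nonneg hs]; exact ⟨by ring, by linarith⟩
  · rw [abs_of_neg hs]; exact ⟨by ring, by linarith⟩

theorem deriv_deriv_exp_comp {φ φ' : ℝ → ℝ} {φ'' x : ℝ} {U : Set ℝ} (hU : U ∈ 𝓝 x)
    (hφ : ∀ y ∈ U, HasDerivAt φ (φ' y) y) (hφ' : HasDerivAt φ' φ'' x) :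
    deriv (deriv fun y => exp (φ y)) x = (φ' x ^ 2 + φ'') * exp (φ x) := by
  have hd : deriv (fun y => exp (φ y)) =ᶠ[𝓝 x] fun y => exp (φ y) * φ' y :=
    eventually_of_mem hU fun y hy => (hφ y hy).exp.deriv
  rw [hd.deriv_eq]
  exact ((hφ x (mem_of_mem_nhds hU)).exp.mul hφ').deriv.trans (by ring)

theorem deriv_deriv_rpow_neg_mul_exp (a c h : ℝ) {x : ℝ} (hx : x < 0) :
    deriv (deriv fun y => (-y) ^ a * exp (-c * y ^ 2 / (2 * h))) x =
      ((a / x - c * x / h) ^ 2 - a / x ^ 2 - c / h) * ((-x) ^ a * exp (-c * x ^ 2 / (2 * h))) := by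
  have hψ : (fun y => (-y) ^ a * exp (-c * y ^ 2 / (2 * h))) =ᶠ[𝓝 x]
      fun y => exp (a * log (-y) - c * y ^ 2 / (2 * h)) :=
    eventually_of_mem (Iio_mem_nhds hx) fun y (hy : y < 0) => by
      dsimp only
      rw [rpow_def_of_pos (neg_pos.2 hy), ← exp_add]; ring_nf
  have hφ : ∀ y ∈ Iio (0 : ℝ),
      HasDerivAt (fun y => a * log (-y) - c * y ^ 2 / (2 * h)) (a / y - c * y / h) y := by
    intro y (hy : y < 0)
    refine ((((hasDerivAt_neg y).log (neg_ne_zero.2 hy.ne)).const_mul a).sub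
      (((hasDerivAt_pow 2 y).const_mul c).div_const (2 * h))).congr_deriv ?_
    field_simp [hy.ne]
    ring
  have hφ' : HasDerivAt (fun y => a / y - c * y / h) (-a / x ^ 2 - c / h) x := by
    refine (((hasDerivAt_const x a).div (hasDerivAt_id x) hx.ne).sub
      (((hasDerivAt_id x).const_mul c).div_const h)).congr_deriv ?_
    simp only [id]
    ring
  rw [hψ.deriv.deriv_eq, deriv_deriv_exp_comp (Iio_mem_nhds hx) hφ hφ', (hψ.eq_of_nhds).symm]
  ring

theorem stmt_12_general (m l h : ℝ) (hl : 0 < l) (hh : 0 < h)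
    (α₁ c E₁ E₂ : ℝ)
    (hα₁ : α₁ = (1 + Real.sqrt (1 + 4*m*l*(m*l + 1))) / 2)
    (hc : c = Real.sqrt (1/l^4 + h/(2*l^6)))
    (hE₁ : E₁ = 1/l^2 + (2*m*l + 1)*c*h)
    (hE₂ : E₂ = 1/l^2 + (2*α₁ + 1)*c*h)
    (ψ₂ : ℝ → ℝ)
    (hψ₂ : ψ₂ = fun x => (-x) ^ α₁ * Real.exp (-c * x^2 / (2*h))) :
    α₁ * (α₁ - 1) = m*l*(m*l + 1) ∧
    m*l < α₁ ∧
    (∀ x : ℝ, x < 0 →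
      -h^2 * deriv (deriv ψ₂) x
          + (1/l^2 + c^2 * x^2 + h^2 * m * l * (m*l + 1) / x^2) * ψ₂ x
        = E₂ * ψ₂ x) ∧
    E₁ < E₂ := by
  obtain ⟨hroot, hlt⟩ := larger_root_mul_sub_one_and_lt (hα₁.trans (by rw [mul_assoc 4 m l]))
  have hc_pos : 0 < c := by rw [hc]; positivity
  refine ⟨hroot, hlt, fun x hx => ?_, ?_⟩
  · rw [hψ₂, deriv_deriv_rpow_neg_mul_exp α₁ c h hx, hE₂,
      show h ^ 2 * m * l * (m * l + 1) = h ^ 2 * (α₁ * (α₁ - 1)) by rw [hroot]; ring]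
    field_simp [hx.ne, hh.ne']
    ring
  · rw [hE₁, hE₂]
    linarith [mul_pos (mul_pos (sub_pos.2 hlt) hc_pos) hh]

/-- With `α₁ = (1 + √(1 + 4ml(ml+1)))/2`, `c_h = (1/l⁴ + h/(2l⁶))^{1/2}` and
`ψ₂(x) = (−x)^{α₁} e^{−c_h x²/(2h)}` for `x < 0`, one has
`α₁(α₁−1) = ml(ml+1)`, `α₁ > ml`,
`−h²ψ₂'' + (1/l² + c_h²x² + h²ml(ml+1)/x²)ψ₂ = E₂(h)ψ₂` with
`E₂(h) = 1/l² + (2α₁+1)c_h h`, and `E₂(h) > E₁(h) = 1/l² + (2ml+1)c_h h`. -/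
theorem stmt_12 (m l h : ℝ) (hm : 0 < m) (hl : 0 < l) (hh : 0 < h)
    (α₁ c E₁ E₂ : ℝ)
    (hα₁ : α₁ = (1 + Real.sqrt (1 + 4*m*l*(m*l + 1))) / 2)
    (hc : c = Real.sqrt (1/l^4 + h/(2*l^6)))
    (hE₁ : E₁ = 1/l^2 + (2*m*l + 1)*c*h)
    (hE₂ : E₂ = 1/l^2 + (2*α₁ + 1)*c*h)
    (ψ₂ : ℝ → ℝ)
    (hψ₂ : ψ₂ = fun x => (-x) ^ α₁ * Real.exp (-c * x^2 / (2*h))) :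
    α₁ * (α₁ - 1) = m*l*(m*l + 1) ∧
    m*l < α₁ ∧
    (∀ x : ℝ, x < 0 →
      -h^2 * deriv (deriv ψ₂) x
          + (1/l^2 + c^2 * x^2 + h^2 * m * l * (m*l + 1) / x^2) * ψ₂ x
        = E₂ * ψ₂ x) ∧
    E₁ < E₂ :=
  stmt_12_general m l h hl hh α₁ c E₁ E₂ hα₁ hc hE₁ hE₂ ψ₂ hψ₂
end
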